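/- arXiv:1902.06879 — 6 statements merged into one kernel-verified Lean document; each statement's English description precedes it below -/
import Mathlib

section
/- Let 𝔰 = (s_1,…,s_r) be a tuple of positive integers and let P_1,…,P_r ∈ F[t] be polynomials, say P_i = Σ_{j=0}^{n_i} u_{ij} t^j, satisfying max_{0≤j≤n_i} |u_{ij}| < q^{s_i·q/(q−1)} for each 1 ≤ i ≤ r. Set J := {0,…,n_1} × ⋯ × {0,…,n_r}, and for j = (j_1,…,j_r) ∈ J set u_j := (u_{1j_1},…,u_{rj_r}) ∈ F^r. Then: (a) for each j ∈ J the family (u_{1j_1}^{q^{i_1}}⋯u_{rj_r}^{q^{i_r}}·(𝕃_{i_1}^{s_1}⋯𝕃_{i_r}^{s_r})^{−1}), indexed by integers i_1 > ⋯ > i_r ≥ 0, is summable in F[[t]] for the product topology, with sum 𝔏i_{𝔰,u_j}; (b) the family (P_1^{(i_1)}⋯P_r^{(i_r)}·(𝕃_{i_1}^{s_1}⋯𝕃_{i_r}^{s_r})^{−1}), indexed by integers i_1 > ⋯ > i_r ≥ 0, is summable in F[[t]]; (c) Σ_{i_1>⋯>i_r≥0} P_1^{(i_1)}⋯P_r^{(i_r)}·(𝕃_{i_1}^{s_1}⋯𝕃_{i_r}^{s_r})^{−1}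 = Σ_{j∈J} t^{j_1+⋯+j_r}·𝔏i_{𝔰,u_j} in F[[t]]. (Taking P_i = H_{s_i−1}, the Anderson–Thakur polynomials, the left-hand side is the Anderson–Thakur series ζ_A^{AT}(𝔰); this is Proposition 5.3 of the paper.) -/
/-!
Since `‖θ‖ = q`, the constant term of `𝕃_i^s` has norm `q^{s(q + ⋯ + q^i)}` and dominates all
other coefficients, so by the ultrametric inequality every coefficient of `𝕃_i^{-s}` has norm at
most `c / c^{q^i}` with `c = q^{sq/(q-1)}`. A polylogarithm term thus has all coefficients bounded
by `∏_k c_k (‖u_k‖ / c_k)^{q^{i_k}}`, which tends to `0` along the cofinite filter when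
`‖u_k‖ < c_k`; over a complete nonarchimedean field this gives coefficientwise summability.
Expanding `P_k^{(i_k)} = Σ_j u_{kj}^{q^{i_k}} t^j` writes each term of the left-hand series as a
fixed finite combination of polylogarithm terms, and the finite sum commutes with the infinite one.
-/

open PowerSeries Filter Topology
open scoped ENNReal

noncomputable section

/-- The product (coefficientwise) topology on `PowerSeries F`. -/
instance psTop {F : Type*} [Semiring F] [TopologicalSpace F] :
    TopologicalSpace (PowerSeries F) :=
  TopologicalSpace.induced (fun φ (n : ℕ) => PowerSeries.coeff n φ) inferInstance

variable {F : Type*} [Field F]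

/-- `𝕃_i = (t-θ^q)⋯(t-θ^{q^i})` as a formal power series. -/
def LL (q : ℕ) (θ : F) (i : ℕ) : PowerSeries F :=
  ∏ m ∈ Finset.range i, (PowerSeries.X - PowerSeries.C (θ ^ q ^ (m + 1)))

/-- General term `u_1^{q^{i_1}}⋯u_r^{q^{i_r}}·(𝕃_{i_1}^{s_1}⋯𝕃_{i_r}^{s_r})⁻¹` of a
t-motivic Carlitz multiple (star) polylogarithm. -/
def polyLogTerm (q : ℕ) (θ : F) {r : ℕ} (s : Fin r → ℕ) (u : Fin r → F)
    (i : Fin r → ℕ) : PowerSeries F :=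
  ∏ k, PowerSeries.C (u k ^ q ^ i k) * (LL q θ (i k) ^ s k)⁻¹

/-- `n`-fold Frobenius (`q^n`-th power) twist of a polynomial, applied coefficientwise. -/
def ptwist (q n : ℕ) (P : Polynomial F) : Polynomial F :=
  ∑ j ∈ Finset.range (P.natDegree + 1), Polynomial.C (P.coeff j ^ q ^ n) * Polynomial.X ^ j

section ProductTopology

variable {R : Type*} [Semiring R] [TopologicalSpace R] {ι : Type*}

lemma PowerSeries.isInducing_coeff :
    IsInducing (fun (φ : PowerSeries R) (d : ℕ) => coeff d φ) := ⟨rfl⟩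

instance [T2Space R] : T2Space (PowerSeries R) :=
  IsEmbedding.t2Space ⟨PowerSeries.isInducing_coeff, fun _ _ h => ext (congrFun h)⟩

lemma PowerSeries.hasSum_iff_forall_hasSum_coeff {f : ι → PowerSeries R} {a : PowerSeries R} :
    HasSum f a ↔ ∀ d, HasSum (fun i => coeff d (f i)) (coeff d a) := by
  rw [← Pi.hasSum, HasSum, HasSum, isInducing_coeff.tendsto_nhds_iff]
  simp only [Function.comp_def, map_sum, Finset.sum_fn]

lemma PowerSeries.summable_iff_forall_summable_coeff {f : ι → PowerSeries R} :
    Summable f ↔ ∀ d, Summable fun i => coeff d (f i) := by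
  refine ⟨fun ⟨a, ha⟩ d => ⟨_, hasSum_iff_forall_hasSum_coeff.mp ha d⟩, fun h => ?_⟩
  exact ⟨mk fun d => (h d).choose, hasSum_iff_forall_hasSum_coeff.mpr fun d => by
    simpa only [coeff_mk] using (h d).choose_spec⟩

instance [ContinuousAdd R] : ContinuousAdd (PowerSeries R) :=
  continuousAdd_induced (AddMonoidHom.pi fun d => (coeff (R := R) d).toAddMonoidHom)

lemma PowerSeries.hasSum_mul_left [IsTopologicalSemiring R] {f : ι → PowerSeries R}
    {a : PowerSeries R} (g : PowerSeries R) (h : HasSum f a) :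
    HasSum (fun i => g * f i) (g * a) := by
  rw [hasSum_iff_forall_hasSum_coeff] at h ⊢
  intro d
  simp only [coeff_mul]
  exact hasSum_sum fun p _ => (h p.2).mul_left _

end ProductTopology

section UltrametricCoefficients

open IsUltrametricDist

lemma PowerSeries.norm_coeff_mul_le {K : Type*} [NormedRing K] [IsUltrametricDist K]
    {φ ψ : PowerSeries K} {a b : ℝ} (hb : 0 ≤ b)
    (hφ : ∀ d, ‖coeff d φ‖ ≤ a) (hψ : ∀ d, ‖coeff d ψ‖ ≤ b) (d : ℕ) :
    ‖coeff d (φ * ψ)‖ ≤ a * b := by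
  have ha : 0 ≤ a := (norm_nonneg _).trans (hφ 0)
  rw [coeff_mul]
  refine norm_sum_le_of_forall_le_of_nonneg (by positivity) fun p _ => ?_
  exact (norm_mul_le _ _).trans (mul_le_mul (hφ p.1) (hψ p.2) (norm_nonneg _) ha)

lemma PowerSeries.norm_coeff_prod_le {K : Type*} [NormedCommRing K] [NormOneClass K]
    [IsUltrametricDist K] {ι : Type*} (t : Finset ι) {f : ι → PowerSeries K} {a : ι → ℝ}
    (h : ∀ k ∈ t, ∀ d, ‖coeff d (f k)‖ ≤ a k) (d : ℕ) :
    ‖coeff d (∏ k ∈ t, f k)‖ ≤ ∏ k ∈ t, a k := by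
  induction t using Finset.cons_induction generalizing d with
  | empty =>
    rw [Finset.prod_empty, Finset.prod_empty, coeff_one]
    split_ifs <;> simp
  | cons k t hk ih =>
    rw [Finset.prod_cons, Finset.prod_cons]
    have hrest := ih fun m hm => h m (Finset.mem_cons_of_mem hm)
    exact norm_coeff_mul_le ((norm_nonneg _).trans (hrest 0)) (h k (Finset.mem_cons_self k t))
      hrest d

lemma PowerSeries.norm_coeff_pow_le {K : Type*} [NormedCommRing K] [NormOneClass K]
    [IsUltrametricDist K] {φ : PowerSeries K} {a : ℝ} (h : ∀ d, ‖coeff d φ‖ ≤ a) (m d : ℕ) :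
    ‖coeff d (φ ^ m)‖ ≤ a ^ m := by
  simpa using norm_coeff_prod_le (Finset.range m) (fun _ _ => h) d

/-- The recursion `coeff d φ⁻¹ = -(constantCoeff φ)⁻¹ * Σ_{a+b=d, b<d} coeff a φ * coeff b φ⁻¹`
propagates the bound by strong induction on `d`. -/
lemma PowerSeries.norm_coeff_inv_le {K : Type*} [NormedField K] [IsUltrametricDist K]
    {φ : PowerSeries K} (h0 : constantCoeff φ ≠ 0)
    (hdom : ∀ d, ‖coeff d φ‖ ≤ ‖constantCoeff φ‖) (d : ℕ) :
    ‖coeff d φ⁻¹‖ ≤ ‖constantCoeff φ‖⁻¹ := by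
  induction d using Nat.strong_induction_on with
  | _ d ih =>
    rw [coeff_inv]
    split_ifs
    · rw [norm_inv]
    rw [norm_mul, norm_neg, norm_inv]
    refine mul_le_of_le_one_right (by positivity) (norm_sum_le_of_forall_le_of_nonneg zero_le_one
      fun p _ => ?_)
    split_ifs with hp
    · rw [norm_mul, ← mul_inv_cancel₀ (norm_ne_zero_iff.mpr h0)]
      exact mul_le_mul (hdom p.1) (ih p.2 hp) (norm_nonneg _) (norm_nonneg _)
    · simp

end UltrametricCoefficients

section CarlitzFactors

lemma PowerSeries.norm_coeff_X_sub_C_le {K : Type*} [NormedField K] {b : K} (hb : 1 ≤ ‖b‖) (d : ℕ) :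
    ‖coeff d (X - C b)‖ ≤ ‖b‖ := by
  rcases d with _ | _ | d
  · simp
  · simpa using hb
  · simp [coeff_X]

lemma norm_constantCoeff_LL {K : Type*} [NormedField K] (q : ℕ) (θ : K) (i : ℕ) :
    ‖constantCoeff (LL q θ i)‖ = ∏ m ∈ Finset.range i, ‖θ‖ ^ q ^ (m + 1) := by
  simp [LL, map_prod, norm_prod]

variable {K : Type*} [NormedField K] [IsUltrametricDist K]

lemma norm_coeff_LL_le (q : ℕ) {θ : K} (hθ : 1 ≤ ‖θ‖) (i d : ℕ) :
    ‖coeff d (LL q θ i)‖ ≤ ‖constantCoeff (LL q θ i)‖ := by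
  rw [norm_constantCoeff_LL, LL]
  refine norm_coeff_prod_le _ (fun m _ d => ?_) d
  simpa only [norm_pow] using norm_coeff_X_sub_C_le (b := θ ^ q ^ (m + 1))
    (by rw [norm_pow]; exact one_le_pow₀ hθ) d

lemma norm_coeff_inv_LL_pow_le (q : ℕ) {θ : K} (hθ : 1 ≤ ‖θ‖) (i s d : ℕ) :
    ‖coeff d (LL q θ i ^ s)⁻¹‖ ≤ ((∏ m ∈ Finset.range i, ‖θ‖ ^ q ^ (m + 1)) ^ s)⁻¹ := by
  have hcc : ‖constantCoeff (LL q θ i ^ s)‖ = (∏ m ∈ Finset.range i, ‖θ‖ ^ q ^ (m + 1)) ^ s := by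
    rw [map_pow, norm_pow, norm_constantCoeff_LL]
  have hne : constantCoeff (LL q θ i ^ s) ≠ 0 := by
    rw [← norm_ne_zero_iff, hcc]
    exact pow_ne_zero _ (Finset.prod_ne_zero_iff.mpr fun m _ => by positivity)
  rw [← hcc]
  refine norm_coeff_inv_le hne (fun d => ?_) d
  exact (norm_coeff_pow_le (norm_coeff_LL_le q hθ i) s d).trans_eq (by rw [map_pow, norm_pow])

end CarlitzFactors

/-- For `‖θ‖ = q` the product is `‖constantCoeff (LL q θ i ^ s)‖`, so with `c = q^{sq/(q-1)}`
this reads `c * ‖constantCoeff (LL q θ i ^ s)‖ = c ^ q ^ i`. -/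
lemma rpow_mul_prod_range_pow_pow_succ {q : ℕ} (hq : 1 < q) (s i : ℕ) :
    (q : ℝ) ^ ((s : ℝ) * q / (q - 1)) * ∏ m ∈ Finset.range i, ((q : ℝ) ^ q ^ (m + 1)) ^ s
      = ((q : ℝ) ^ ((s : ℝ) * q / (q - 1))) ^ q ^ i := by
  have hq0 : (0 : ℝ) < q := by positivity
  have hq1 : (q : ℝ) - 1 ≠ 0 := sub_ne_zero.mpr (by exact_mod_cast hq.ne')
  rw [Finset.prod_pow, Finset.prod_pow_eq_pow_sum, ← pow_mul, ← Real.rpow_natCast,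
    ← Real.rpow_natCast _ (q ^ i), ← Real.rpow_add hq0, ← Real.rpow_mul hq0.le]
  congr 1
  push_cast
  have hgeom := geom_sum_eq (x := (q : ℝ)) (by exact_mod_cast hq.ne') i
  simp only [pow_succ, ← Finset.sum_mul, hgeom]
  field_simp
  ring

lemma norm_coeff_C_pow_mul_inv_LL_pow_le {K : Type*} [NormedField K] [IsUltrametricDist K]
    {q : ℕ} (hq : 1 < q) {θ : K} (hθ : ‖θ‖ = q) (a : K) (s i d : ℕ) :
    ‖coeff d (C (a ^ q ^ i) * (LL q θ i ^ s)⁻¹)‖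
      ≤ (q : ℝ) ^ ((s : ℝ) * q / (q - 1)) * (‖a‖ / (q : ℝ) ^ ((s : ℝ) * q / (q - 1))) ^ q ^ i := by
  set c := (q : ℝ) ^ ((s : ℝ) * q / (q - 1))
  have hc : 0 < c := by positivity
  have hθ1 : 1 ≤ ‖θ‖ := by rw [hθ]; exact_mod_cast hq.le
  have hC : ∀ d, ‖coeff d (C (a ^ q ^ i))‖ ≤ ‖a‖ ^ q ^ i := fun d => by
    rw [coeff_C]
    split_ifs <;> simp
  have hLL : (∏ m ∈ Finset.range i, ‖θ‖ ^ q ^ (m + 1)) ^ s = c ^ q ^ i / c := by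
    rw [eq_div_iff hc.ne', mul_comm, ← rpow_mul_prod_range_pow_pow_succ hq, hθ, Finset.prod_pow]
  calc ‖coeff d (C (a ^ q ^ i) * (LL q θ i ^ s)⁻¹)‖
      ≤ ‖a‖ ^ q ^ i * ((∏ m ∈ Finset.range i, ‖θ‖ ^ q ^ (m + 1)) ^ s)⁻¹ :=
        norm_coeff_mul_le (by positivity) hC (norm_coeff_inv_LL_pow_le q hθ1 i s) d
    _ = c * (‖a‖ / c) ^ q ^ i := by
        rw [hLL, div_pow]
        field_simp

lemma tendsto_cofinite_pow_sum {ι : Type*} [Fintype ι] {τ : ℝ} (h0 : 0 ≤ τ) (h1 : τ < 1) :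
    Tendsto (fun i : ι → ℕ => τ ^ ∑ k, i k) cofinite (𝓝 0) := by
  refine (tendsto_pow_atTop_nhds_zero_of_lt_one h0 h1).comp (tendsto_atTop.mpr fun N => ?_)
  refine (Set.Finite.pi (t := fun _ : ι => Set.Iio N) fun _ => Set.finite_Iio N).subset ?_
  intro i hi k _
  exact (Finset.single_le_sum (fun k _ => Nat.zero_le (i k)) (Finset.mem_univ k)).trans_lt
    (not_le.mp hi)

lemma PowerSeries.summable_of_norm_coeff_le {K : Type*} [NormedRing K] [IsUltrametricDist K]
    [CompleteSpace K] {ι : Type*} {f : ι → PowerSeries K} {B : ι → ℝ}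
    (hB : Tendsto B cofinite (𝓝 0)) (hf : ∀ i d, ‖coeff d (f i)‖ ≤ B i) : Summable f :=
  summable_iff_forall_summable_coeff.mpr fun d =>
    NonarchimedeanAddGroup.summable_of_tendsto_cofinite_zero <|
      tendsto_zero_iff_norm_tendsto_zero.mpr <|
        squeeze_zero (fun _ => norm_nonneg _) (fun i => hf i d) hB

lemma summable_polyLogTerm {K : Type*} [NormedField K] [IsUltrametricDist K] [CompleteSpace K]
    {q : ℕ} (hq : 1 < q) {θ : K} (hθ : ‖θ‖ = q) {r : ℕ} (s : Fin r → ℕ) (u : Fin r → K)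
    (hu : ∀ k, ‖u k‖ < (q : ℝ) ^ ((s k : ℝ) * q / (q - 1))) (p : (Fin r → ℕ) → Prop) :
    Summable fun i : {i // p i} => polyLogTerm q θ s u i.1 := by
  set c : Fin r → ℝ := fun k => (q : ℝ) ^ ((s k : ℝ) * q / (q - 1))
  have hc : ∀ k, 0 < c k := fun k => by positivity
  obtain ⟨τ, hτ0, hτ1, hτ⟩ : ∃ τ : ℝ, 0 < τ ∧ τ < 1 ∧ ∀ k, ‖u k‖ / c k ≤ τ := by
    have hnear : ∀ᶠ τ in 𝓝[<] (1 : ℝ), 0 < τ ∧ ∀ k, ‖u k‖ / c k < τ :=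
      nhdsWithin_le_nhds <| (eventually_gt_nhds one_pos).and <| eventually_all.mpr fun k =>
        eventually_gt_nhds ((div_lt_one (hc k)).mpr (hu k))
    obtain ⟨τ, ⟨hτ0, hτ⟩, hτ1⟩ := (hnear.and self_mem_nhdsWithin).exists
    exact ⟨τ, hτ0, hτ1, fun k => (hτ k).le⟩
  refine summable_of_norm_coeff_le (B := fun i => (∏ k, c k) * τ ^ ∑ k, i.1 k) ?_ fun i d => ?_
  · simpa using ((tendsto_cofinite_pow_sum hτ0.le hτ1).comp
      Subtype.val_injective.tendsto_cofinite).const_mul (∏ k, c k)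
  calc ‖coeff d (polyLogTerm q θ s u i.1)‖ ≤ ∏ k, c k * τ ^ i.1 k := by
        refine norm_coeff_prod_le _ (fun k _ d => ?_) d
        refine (norm_coeff_C_pow_mul_inv_LL_pow_le hq hθ (u k) (s k) (i.1 k) d).trans ?_
        refine mul_le_mul_of_nonneg_left ?_ (hc k).le
        exact (pow_le_pow_left₀ (by positivity) (hτ k) _).trans
          (pow_le_pow_of_le_one hτ0.le hτ1.le (Nat.lt_pow_self hq).le)
    _ = (∏ k, c k) * τ ^ ∑ k, i.1 k := by
        rw [Finset.prod_mul_distrib, Finset.prod_pow_eq_pow_sum]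

lemma coeff_ptwist {q : ℕ} (hq : q ≠ 0) (m : ℕ) (P : Polynomial F) (d : ℕ) :
    (ptwist q m P).coeff d = P.coeff d ^ q ^ m := by
  simp only [ptwist, Polynomial.finsetSum_coeff, Polynomial.coeff_C_mul, Polynomial.coeff_X_pow,
    mul_ite, mul_one, mul_zero, Finset.sum_ite_eq, Finset.mem_range]
  split_ifs with hd
  · rfl
  · rw [Polynomial.coeff_eq_zero_of_natDegree_lt (by omega), zero_pow (pow_ne_zero _ hq)]

lemma coe_ptwist_of_eq_sum {q : ℕ} (hq : q ≠ 0) (m : ℕ) {P : Polynomial F} {n : ℕ} {u : ℕ → F}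
    (hP : P = ∑ j ∈ Finset.range (n + 1), Polynomial.C (u j) * Polynomial.X ^ j) :
    (ptwist q m P : PowerSeries F) = ∑ j ∈ Finset.range (n + 1), C (u j ^ q ^ m) * X ^ j := by
  ext d
  simp only [Polynomial.coeff_coe, coeff_ptwist hq, hP, Polynomial.finsetSum_coeff, map_sum,
    Polynomial.coeff_C_mul, Polynomial.coeff_X_pow, coeff_C_mul, coeff_X_pow]
  simp [zero_pow (pow_ne_zero m hq)]

lemma prod_ptwist_mul_inv_LL_pow {q : ℕ} (hq : q ≠ 0) (θ : F) {r : ℕ} (s n : Fin r → ℕ)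
    (u : Fin r → ℕ → F) (P : Fin r → Polynomial F)
    (hP : ∀ k, P k = ∑ j ∈ Finset.range (n k + 1), Polynomial.C (u k j) * Polynomial.X ^ j)
    (i : Fin r → ℕ) :
    ∏ k, ((ptwist q (i k) (P k) : PowerSeries F) * (LL q θ (i k) ^ s k)⁻¹)
      = ∑ j ∈ Fintype.piFinset (fun k => Finset.range (n k + 1)),
          X ^ (∑ k, j k) * polyLogTerm q θ s (fun k => u k (j k)) i := by
  simp_rw [coe_ptwist_of_eq_sum hq _ (hP _), Finset.sum_mul]
  rw [Finset.prod_univ_sum]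
  refine Finset.sum_congr rfl fun j _ => ?_
  rw [polyLogTerm, ← Finset.prod_pow_eq_pow_sum, ← Finset.prod_mul_distrib]
  exact Finset.prod_congr rfl fun k _ => by ring

theorem statement0_general
    {F : Type*} [NormedField F] [IsUltrametricDist F] [CompleteSpace F]
    (q : ℕ) (hq : IsPrimePow q) (θ : F) (hθ : ‖θ‖ = (q : ℝ))
    {r : ℕ} (s : Fin r → ℕ)
    (n : Fin r → ℕ) (u : Fin r → ℕ → F)
    (P : Fin r → Polynomial F)
    (hP : ∀ k, P k = ∑ j ∈ Finset.range (n k + 1), Polynomial.C (u k j) * Polynomial.X ^ j)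
    (hu : ∀ k, ∀ j ≤ n k, ‖u k j‖ < (q : ℝ) ^ ((s k : ℝ) * (q : ℝ) / ((q : ℝ) - 1))) :
    (∀ j ∈ Fintype.piFinset (fun k => Finset.range (n k + 1)),
      Summable (fun i : {i : Fin r → ℕ // StrictAnti i} =>
        polyLogTerm q θ s (fun k => u k (j k)) i.1))
    ∧ Summable (fun i : {i : Fin r → ℕ // StrictAnti i} =>
        ∏ k, ((ptwist q (i.1 k) (P k) : PowerSeries F) * (LL q θ (i.1 k) ^ s k)⁻¹))
    ∧ (∑' i : {i : Fin r → ℕ // StrictAnti i},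
          ∏ k, ((ptwist q (i.1 k) (P k) : PowerSeries F) * (LL q θ (i.1 k) ^ s k)⁻¹))
        = ∑ j ∈ Fintype.piFinset (fun k => Finset.range (n k + 1)),
            (PowerSeries.X : PowerSeries F) ^ (∑ k, j k) *
              ∑' i : {i : Fin r → ℕ // StrictAnti i},
                polyLogTerm q θ s (fun k => u k (j k)) i.1 := by
  have hq1 : 1 < q := hq.one_lt
  have hLi : ∀ j ∈ Fintype.piFinset (fun k => Finset.range (n k + 1)),
      Summable fun i : {i : Fin r → ℕ // StrictAnti i} =>
        polyLogTerm q θ s (fun k => u k (j k)) i.1 := fun j hj =>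
    summable_polyLogTerm hq1 hθ s _ (fun k => hu k (j k)
      (Nat.lt_succ_iff.mp (Finset.mem_range.mp (Fintype.mem_piFinset.mp hj k)))) _
  have hsum : HasSum (fun i : {i : Fin r → ℕ // StrictAnti i} =>
        ∏ k, ((ptwist q (i.1 k) (P k) : PowerSeries F) * (LL q θ (i.1 k) ^ s k)⁻¹))
      (∑ j ∈ Fintype.piFinset (fun k => Finset.range (n k + 1)),
        X ^ (∑ k, j k) * ∑' i : {i : Fin r → ℕ // StrictAnti i},
          polyLogTerm q θ s (fun k => u k (j k)) i.1) := by
    simp_rw [prod_ptwist_mul_inv_LL_pow hq1.ne_bot θ s n u P hP]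
    exact hasSum_sum fun j hj => hasSum_mul_left _ (hLi j hj).hasSum
  exact ⟨hLi, hsum.summable, hsum.tsum_eq⟩

/-- Proposition 5.3 of the paper.  For polynomials `P_1,…,P_r` with small
coefficients, the family `P_1^{(i_1)}⋯P_r^{(i_r)}/(𝕃_{i_1}^{s_1}⋯𝕃_{i_r}^{s_r})`
(over `i_1 > ⋯ > i_r ≥ 0`) is summable in `F[[t]]`, each non-star polylogarithm family at the
coefficient points is summable, and the sum decomposes as
`Σ_{j∈J} t^{j_1+⋯+j_r}·𝔏i_{𝔰,u_j}`. -/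
theorem statement0
    {F : Type*} [NormedField F] [IsUltrametricDist F] [CompleteSpace F]
    (q : ℕ) (hq : IsPrimePow q) (θ : F) (hθ : ‖θ‖ = (q : ℝ))
    {r : ℕ} (hr : 0 < r) (s : Fin r → ℕ) (hs : ∀ k, 0 < s k)
    (n : Fin r → ℕ) (u : Fin r → ℕ → F)
    (P : Fin r → Polynomial F)
    (hP : ∀ k, P k = ∑ j ∈ Finset.range (n k + 1), Polynomial.C (u k j) * Polynomial.X ^ j)
    (hu : ∀ k, ∀ j ≤ n k, ‖u k j‖ < (q : ℝ) ^ ((s k : ℝ) * (q : ℝ) / ((q : ℝ) - 1))) :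
    (∀ j ∈ Fintype.piFinset (fun k => Finset.range (n k + 1)),
      Summable (fun i : {i : Fin r → ℕ // StrictAnti i} =>
        polyLogTerm q θ s (fun k => u k (j k)) i.1))
    ∧ Summable (fun i : {i : Fin r → ℕ // StrictAnti i} =>
        ∏ k, ((ptwist q (i.1 k) (P k) : PowerSeries F) * (LL q θ (i.1 k) ^ s k)⁻¹))
    ∧ (∑' i : {i : Fin r → ℕ // StrictAnti i},
          ∏ k, ((ptwist q (i.1 k) (P k) : PowerSeries F) * (LL q θ (i.1 k) ^ s k)⁻¹))
        = ∑ j ∈ Fintype.piFinset (fun k => Finset.range (n k + 1)),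
            (PowerSeries.X : PowerSeries F) ^ (∑ k, j k) *
              ∑' i : {i : Fin r → ℕ // StrictAnti i},
                polyLogTerm q θ s (fun k => u k (j k)) i.1 :=
  statement0_general q hq θ hθ s n u P hP hu
end
end

section
/- Let 𝔰 = (s_1,…,s_r) be a tuple of positive integers and u = (u_1,…,u_r) ∈ F^r with |u_k| ≤ q^{s_k·q/(q−1)} for 1 ≤ k ≤ r−1 and |u_r| < q^{s_r·q/(q−1)}. Fix 1 ≤ i ≤ r. Then the family, indexed by pairs (n, (k_0,…,k_n)) where n ≥ 0 is an integer and i = k_0 ≤ k_1 ≤ ⋯ ≤ k_n ≤ r are integers, of elements Π_{m=0}^{n} Π_{k_m ≤ k < k_{m+1}} u_k^{q^m}·(𝕃_m^{s_k})^{−1} ∈ F[[t]] (with the convention k_{n+1} := r+1 and empty products equal 1) is summable in F[[t]] for the product topology, and its sum equals Σ over all integer tuples 0 ≤ m_i ≤ m_{i+1} ≤ ⋯ ≤ m_r of u_i^{q^{m_i}}⋯u_r^{q^{m_r}}·(𝕃_{m_i}^{s_i}⋯𝕃_{m_r}^{s_r})^{−1}, i.e. the t-motivic Carlitz multiple star polylogarithm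 𝔏i⋆_{(s_r,…,s_i),(u_r,…,u_i)} (whose defining family is likewise summable). (This is the summation identity Σ_{n≥0} β_{n,i} = (−1)^{r−i}·(−1)^{r−i}·𝔏i⋆ established in the proof of Theorem 3.3 (T:Logcoords) of the paper.) -/
open PowerSeries Filter Topology
open scoped ENNReal

noncomputable section

variable {F : Type*} [Field F]

/-- The term `Π_{m=0}^{n} Π_{k_m ≤ k < k_{m+1}} u_k^{q^m}·(𝕃_m^{s_k})⁻¹` attached to a
weakly increasing chain `kc : Fin (n+1) → ℕ`, with the convention `k_{n+1} := r+1`;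
empty products equal `1`. -/
def starChainProd (q : ℕ) (θ : F) (s : ℕ → ℕ) (u : ℕ → F) (r : ℕ) {n : ℕ}
    (kc : Fin (n + 1) → ℕ) : PowerSeries F :=
  ∏ m ∈ Finset.range (n + 1),
    ∏ k ∈ Finset.Ico (kc ⟨min m n, by omega⟩)
        (if h : m < n then kc ⟨m + 1, by omega⟩ else r + 1),
      PowerSeries.C (u k ^ q ^ m) * (LL q θ m ^ s k)⁻¹

/-!
Sending a chain `i = k_0 ≤ ⋯ ≤ k_n ≤ r` to the tuple `(m_i, …, m_r)`, where `m_k` is the index of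
the block `[k_m, k_{m+1})` containing `k`, is a bijection onto all weakly increasing tuples
(the length is recovered as `n = m_r`), and it carries each chain product to the corresponding term of `𝔏i⋆`. So
everything reduces to the summability of the family defining `𝔏i⋆`.

The coefficients of `𝕃_m⁻¹ = ∏ (t - θ^{q^j})⁻¹` have norm at most `q^{-(q + ⋯ + q^m)}`, and
`q + ⋯ + q^m = q (q^m - 1)/(q - 1)`, so with `R = q^{sq/(q-1)}` every coefficient of
`u^{q^m} 𝕃_m^{-s}` has norm at most `R (‖u‖/R)^{q^m}`. The terms of `𝔏i⋆` are therefore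
coefficientwise bounded by a constant times `(‖u_r‖/R_r)^{q^{m_r}}`, which tends to `0` because
only finitely many weakly increasing tuples have bounded last entry; over a complete
nonarchimedean field this gives summability.
-/

open Finset

namespace PowerSeries

section Topology
variable {R : Type*} [Semiring R] [TopologicalSpace R]

theorem isInducing_coeffs :
    IsInducing (AddMonoidHom.pi fun n => (coeff n : R⟦X⟧ →ₗ[R] R).toAddMonoidHom) := ⟨rfl⟩

theorem summable_of_summable_coeff {ι : Type*} {f : ι → R⟦X⟧}
    (h : ∀ d, Summable fun x => coeff d (f x)) : Summable f :=
  ⟨mk fun d => ∑' x, coeff d (f x), (isInducing_coeffs.hasSum_iff f _).1 <|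
    Pi.hasSum.2 fun d => by simpa [AddMonoidHom.pi] using (h d).hasSum⟩

end Topology

section Ultrametric
variable {K : Type*} [NormedCommRing K] [IsUltrametricDist K]

theorem norm_coeff_prod_le_s5 [NormOneClass K] {ι : Type*} (f : ι → K⟦X⟧) (b : ι → ℝ)
    (h : ∀ j e, ‖coeff e (f j)‖ ≤ b j) (S : Finset ι) (d : ℕ) :
    ‖coeff d (∏ j ∈ S, f j)‖ ≤ ∏ j ∈ S, b j := by
  have hb : ∀ j, 0 ≤ b j := fun j => (norm_nonneg _).trans (h j 0)
  induction S using Finset.cons_induction generalizing d with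
  | empty =>
    rw [prod_empty, coeff_one]
    split <;> simp
  | cons j S hj ih =>
    rw [prod_cons, prod_cons, coeff_mul]
    refine IsUltrametricDist.norm_sum_le_of_forall_le_of_nonneg
      (mul_nonneg (hb j) (prod_nonneg fun x _ => hb x)) fun x _ => ?_
    exact (norm_mul_le _ _).trans (mul_le_mul (h j _) (ih _) (norm_nonneg _) (hb j))

theorem norm_coeff_pow_le_s5 [NormOneClass K] (f : K⟦X⟧) (b : ℝ) (h : ∀ e, ‖coeff e f‖ ≤ b)
    (n d : ℕ) :
    ‖coeff d (f ^ n)‖ ≤ b ^ n := by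
  simpa using norm_coeff_prod_le_s5 (fun _ => f) (fun _ => b) (fun _ => h) (range n) d

variable [CompleteSpace K]

theorem summable_of_norm_coeff_le_s5 {ι : Type*} {f : ι → K⟦X⟧} {b : ι → ℝ}
    (hb : Tendsto b cofinite (𝓝 0)) (h : ∀ x d, ‖coeff d (f x)‖ ≤ b x) : Summable f :=
  summable_of_summable_coeff fun d =>
    NonarchimedeanAddGroup.summable_of_tendsto_cofinite_zero
      (squeeze_zero_norm (fun x => h x d) hb)

end Ultrametric

section Inverse
variable {k : Type*} [Field k]

theorem inv_prod {ι : Type*} (S : Finset ι) (f : ι → k⟦X⟧) :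
    (∏ j ∈ S, f j)⁻¹ = ∏ j ∈ S, (f j)⁻¹ := by
  induction S using Finset.cons_induction with
  | empty => simp
  | cons j S hj ih => rw [prod_cons, prod_cons, PowerSeries.mul_inv_rev, ih, mul_comm]

theorem inv_pow (f : k⟦X⟧) (n : ℕ) : (f ^ n)⁻¹ = f⁻¹ ^ n := by
  simpa using inv_prod (range n) fun _ => f

theorem coeff_inv_X_sub_C {a : k} (ha : a ≠ 0) (d : ℕ) :
    coeff d (X - C a)⁻¹ = -a⁻¹ ^ (d + 1) := by
  have h : (X - C a)⁻¹ = -invUnitsSub (Units.mk0 a ha) := by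
    rw [PowerSeries.inv_eq_iff_mul_eq_one (by simp [ha])]
    have h := invUnitsSub_mul_sub (Units.mk0 a ha)
    rw [Units.val_mk0] at h
    linear_combination h
  simp [h]

end Inverse

theorem norm_coeff_inv_X_sub_C_le {K : Type*} [NormedField K] {a : K} (ha : 1 ≤ ‖a‖)
    (d : ℕ) :
    ‖coeff d (X - C a)⁻¹‖ ≤ ‖a‖⁻¹ := by
  rw [coeff_inv_X_sub_C (norm_pos_iff.1 (one_pos.trans_le ha)), norm_neg, norm_pow, norm_inv]
  exact pow_le_of_le_one (by positivity) (inv_le_one_of_one_le₀ ha) (by omega)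

end PowerSeries

def polylogRadius (q s : ℕ) : ℝ := (q : ℝ) ^ ((s : ℝ) * q / (q - 1))

def polylogFactor (q : ℕ) (θ a : F) (s m : ℕ) : F⟦X⟧ := C (a ^ q ^ m) * (LL q θ m ^ s)⁻¹

theorem polylogRadius_pos {q : ℕ} (hq : 0 < q) (s : ℕ) : 0 < polylogRadius q s :=
  Real.rpow_pos_of_pos (by exact_mod_cast hq) _

theorem polylogRadius_pow {q : ℕ} (hq : 2 ≤ q) (s m : ℕ) :
    polylogRadius q s ^ q ^ m
      = polylogRadius q s * ((q : ℝ) ^ ∑ j ∈ range m, q ^ (j + 1)) ^ s := by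
  have hq' : (2 : ℝ) ≤ q := by exact_mod_cast hq
  have hsum : ((∑ j ∈ range m, q ^ (j + 1) : ℕ) : ℝ) * (q - 1) = q * (q ^ m - 1) := by
    push_cast
    simp only [pow_succ', ← mul_sum, mul_assoc, geom_sum_mul]
  unfold polylogRadius
  rw [← Real.rpow_natCast, ← Real.rpow_mul (by positivity), ← pow_mul,
    ← Real.rpow_natCast _ (_ * s), ← Real.rpow_add (by positivity)]
  congr 1
  have hq1 : (q : ℝ) - 1 ≠ 0 := by linarith
  push_cast at hsum ⊢
  field_simp
  linear_combination -(s : ℝ) * hsum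

theorem tendsto_apply_top_cofinite_atTop {ι : Type*} [Finite ι] [Preorder ι] {t : ι}
    (ht : IsTop t) :
    Tendsto (fun mc : {mc : ι → ℕ // Monotone mc} => mc.1 t) cofinite atTop := by
  rw [← Nat.cofinite_eq_atTop]
  refine Tendsto.cofinite_of_finite_preimage_singleton fun N => Set.Finite.to_subtype ?_
  refine ((Set.Finite.pi fun _ => Set.finite_Iic N).preimage
    Subtype.val_injective.injOn).subset ?_
  rintro mc (hmc : mc.1 t = N) k -
  exact hmc ▸ mc.2 (ht k)

section Norm
variable {K : Type*} [NormedField K] [IsUltrametricDist K]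

theorem norm_coeff_inv_LL_le {q : ℕ} (hq : 1 ≤ q) {θ : K} (hθ : ‖θ‖ = q) (m d : ℕ) :
    ‖coeff d (LL q θ m)⁻¹‖ ≤ ((q : ℝ) ^ ∑ j ∈ range m, q ^ (j + 1))⁻¹ := by
  have hθq : ∀ j, ‖θ ^ q ^ (j + 1)‖ = (q : ℝ) ^ q ^ (j + 1) := by simp [hθ]
  rw [LL, PowerSeries.inv_prod]
  refine (norm_coeff_prod_le_s5 _ _ (fun j e => norm_coeff_inv_X_sub_C_le ?_ e) _ d).trans_eq ?_
  · rw [hθq]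
    exact one_le_pow₀ (by exact_mod_cast hq)
  · simp only [hθq, prod_inv_distrib, prod_pow_eq_pow_sum]

theorem norm_coeff_polylogFactor_le {q : ℕ} (hq : 2 ≤ q) {θ : K} (hθ : ‖θ‖ = q) (a : K)
    (s m d : ℕ) :
    ‖coeff d (polylogFactor q θ a s m)‖
      ≤ polylogRadius q s * (‖a‖ / polylogRadius q s) ^ q ^ m := by
  have hL : ∀ e, ‖coeff e (LL q θ m)⁻¹‖ ≤ ((q : ℝ) ^ ∑ j ∈ range m, q ^ (j + 1))⁻¹ :=
    norm_coeff_inv_LL_le (by omega) hθ m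
  rw [polylogFactor, coeff_C_mul, norm_mul, norm_pow, PowerSeries.inv_pow, div_pow,
    polylogRadius_pow hq]
  calc ‖a‖ ^ q ^ m * ‖coeff d ((LL q θ m)⁻¹ ^ s)‖
      ≤ ‖a‖ ^ q ^ m * ((q : ℝ) ^ ∑ j ∈ range m, q ^ (j + 1))⁻¹ ^ s := by
        gcongr
        exact norm_coeff_pow_le_s5 _ _ hL s d
    _ = _ := by
        have := polylogRadius_pos (by omega : 0 < q) s
        rw [_root_.inv_pow]
        field_simp

theorem summable_prod_polylogFactor {q : ℕ} (hq : 2 ≤ q) {θ : K} (hθ : ‖θ‖ = q)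
    [CompleteSpace K] {ι : Type*} [Fintype ι] [Preorder ι] {t : ι} (ht : IsTop t)
    (a : ι → K) (s : ι → ℕ) (ha : ∀ k ≠ t, ‖a k‖ ≤ polylogRadius q (s k))
    (hat : ‖a t‖ < polylogRadius q (s t)) :
    Summable fun mc : {mc : ι → ℕ // Monotone mc} =>
      ∏ k, polylogFactor q θ (a k) (s k) (mc.1 k) := by
  set ρ : ι → ℝ := fun k => ‖a k‖ / polylogRadius q (s k)
  have hR : ∀ k, 0 < polylogRadius q (s k) := fun k => polylogRadius_pos (by omega) _
  have hρ0 : ∀ k, 0 ≤ ρ k := fun k => div_nonneg (norm_nonneg _) (hR k).le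
  have hρ1 : ∀ k ≠ t, ρ k ≤ 1 := fun k hk => (div_le_one (hR k)).2 (ha k hk)
  have hρt : ρ t < 1 := (div_lt_one (hR t)).2 hat
  refine summable_of_norm_coeff_le_s5
    (b := fun mc => (∏ k, polylogRadius q (s k)) * ρ t ^ q ^ mc.1 t) ?_ fun mc d => ?_
  · have hpow : Tendsto (fun N : ℕ => ρ t ^ q ^ N) atTop (𝓝 0) :=
      (tendsto_pow_atTop_nhds_zero_of_lt_one (hρ0 t) hρt).comp
        (tendsto_pow_atTop_atTop_of_one_lt (by omega : 1 < q))
    simpa using (hpow.comp (tendsto_apply_top_cofinite_atTop ht)).const_mul _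
  calc ‖coeff d (∏ k, polylogFactor q θ (a k) (s k) (mc.1 k))‖
      ≤ ∏ k, polylogRadius q (s k) * ρ k ^ q ^ mc.1 k :=
        norm_coeff_prod_le_s5 _ _ (fun k e => norm_coeff_polylogFactor_le hq hθ _ _ _ e) _ d
    _ = (∏ k, polylogRadius q (s k)) * ∏ k, ρ k ^ q ^ mc.1 k := prod_mul_distrib
    _ ≤ (∏ k, polylogRadius q (s k)) * ρ t ^ q ^ mc.1 t := by
        classical
        refine mul_le_mul_of_nonneg_left ?_ (prod_nonneg fun k _ => (hR k).le)
        rw [← mul_prod_erase univ _ (mem_univ t)]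
        exact mul_le_of_le_one_right (pow_nonneg (hρ0 t) _) <| prod_le_one
          (fun k _ => pow_nonneg (hρ0 k) _)
          fun k hk => pow_le_one₀ (hρ0 k) (hρ1 k (ne_of_mem_erase hk))

end Norm

theorem Fin.mem_iff_lt_card_of_isLowerSet {M : ℕ} {S : Finset (Fin M)}
    (hS : IsLowerSet (S : Set (Fin M))) (k : Fin M) : k ∈ S ↔ (k : ℕ) < #S := by
  constructor
  · intro hk
    have hsub : Iic k ⊆ S := fun x hx => hS (mem_Iic.1 hx) hk
    simpa using card_le_card hsub
  · intro hlt
    by_contra hk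
    have hsub : S ⊆ Iio k := fun x hx => mem_Iio.2 (lt_of_not_ge fun hkx => hk (hS hkx hx))
    have := card_le_card hsub
    rw [Fin.card_Iio] at this
    omega

section Chains

-- For monotone `kc` with `kc 0 ≤ κ`: the largest `m` with `kc m ≤ κ`, the block containing `κ`.
def blockIndex {n : ℕ} (kc : Fin (n + 1) → ℕ) (κ : ℕ) : ℕ := #{m | kc m ≤ κ} - 1

-- The inverse construction: the `m`-th entry of the chain attached to a monotone tuple `mc`.
def blockStart (i : ℕ) {L : ℕ} (mc : Fin L → ℕ) (m : ℕ) : ℕ := i + #{k | mc k < m}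

variable {n L i : ℕ}

theorem blockIndex_lt_iff {kc : Fin (n + 1) → ℕ} (hkc : Monotone kc) {κ : ℕ} (hκ : kc 0 ≤ κ)
    (m : Fin (n + 1)) : blockIndex kc κ < m ↔ κ < kc m := by
  have hpos : 0 < #{m | kc m ≤ κ} := card_pos.2 ⟨0, by simpa using hκ⟩
  have hmem := Fin.mem_iff_lt_card_of_isLowerSet (S := {m | kc m ≤ κ})
    (fun _ _ hba ha => mem_coe.2 <| mem_filter.2
      ⟨mem_univ _, (hkc hba).trans (mem_filter.1 (mem_coe.1 ha)).2⟩) m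
  simp only [mem_filter, mem_univ, true_and] at hmem
  unfold blockIndex
  omega

theorem blockIndex_le (kc : Fin (n + 1) → ℕ) (κ : ℕ) : blockIndex kc κ ≤ n := by
  have := card_filter_le univ fun m => kc m ≤ κ
  rw [card_univ, Fintype.card_fin] at this
  unfold blockIndex
  omega

theorem blockIndex_of_forall_le {kc : Fin (n + 1) → ℕ} {κ : ℕ} (h : ∀ m, kc m ≤ κ) :
    blockIndex kc κ = n := by
  simp [blockIndex, filter_true_of_mem fun m _ => h m]

theorem blockIndex_mono (kc : Fin (n + 1) → ℕ) : Monotone (blockIndex kc) := fun _ _ h =>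
  Nat.sub_le_sub_right (card_le_card (monotone_filter_right _ fun _ _ hm => hm.trans h)) 1

theorem blockStart_le_iff {mc : Fin L → ℕ} (hmc : Monotone mc) (m : ℕ) (k : Fin L) :
    blockStart i mc m ≤ i + k ↔ m ≤ mc k := by
  have hmem := Fin.mem_iff_lt_card_of_isLowerSet (S := {k | mc k < m})
    (fun _ _ hba ha => mem_coe.2 <| mem_filter.2
      ⟨mem_univ _, (hmc hba).trans_lt (mem_filter.1 (mem_coe.1 ha)).2⟩) k
  simp only [mem_filter, mem_univ, true_and] at hmem
  unfold blockStart
  omega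

theorem blockStart_mono (i : ℕ) (mc : Fin L → ℕ) : Monotone (blockStart i mc) := fun _ _ h =>
  Nat.add_le_add_left (card_le_card (monotone_filter_right _ fun _ _ hk => hk.trans_le h)) i

theorem blockIndex_blockStart {mc : Fin L → ℕ} (hmc : Monotone mc) {k : Fin L}
    (hk : mc k ≤ n) :
    blockIndex (fun m : Fin (n + 1) => blockStart i mc m) (i + k) = mc k := by
  have hfilter : ({m | blockStart i mc m ≤ i + k} : Finset (Fin (n + 1)))
      = Iic ⟨mc k, Nat.lt_succ_of_le hk⟩ := by
    ext m
    simp [blockStart_le_iff hmc, Fin.le_def]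
  simp [blockIndex, hfilter]

theorem blockStart_blockIndex {kc : Fin (n + 1) → ℕ} (hkc : Monotone kc) (h0 : kc 0 = i)
    {m : Fin (n + 1)} (hm : kc m < i + L) :
    blockStart i (fun k : Fin L => blockIndex kc (i + k)) m = kc m := by
  have him : i ≤ kc m := h0 ▸ hkc (Fin.zero_le m)
  have hfilter : ({k | blockIndex kc (i + k) < m} : Finset (Fin L))
      = Iio ⟨kc m - i, by omega⟩ := by
    ext k
    have := blockIndex_lt_iff hkc (κ := i + k) (h0 ▸ Nat.le_add_right i k) m
    simp only [mem_filter, mem_univ, true_and, mem_Iio, Fin.lt_def]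
    omega
  simp only [blockStart, hfilter, Fin.card_Iio]
  omega

end Chains

abbrev StarChain (i r : ℕ) : Type :=
  Σ n : ℕ, {kc : Fin (n + 1) → ℕ // Monotone kc ∧ kc 0 = i ∧ ∀ m, kc m ≤ r}

def StarChain.toTuple {i r : ℕ} (p : StarChain i r) :
    {mc : Fin (r + 1 - i) → ℕ // Monotone mc} :=
  ⟨fun k => blockIndex p.2.1 (i + k), fun _ _ h => blockIndex_mono _ (by simpa using h)⟩

theorem StarChain.toTuple_bijective {i r : ℕ} (hir : i ≤ r) :
    Function.Bijective (StarChain.toTuple (i := i) (r := r)) := by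
  have hlast : r - i < r + 1 - i := by omega
  constructor
  · rintro ⟨n, kc, hkc, h0, hle⟩ ⟨n', kc', hkc', h0', hle'⟩ h
    have hval := congrArg Subtype.val h
    obtain rfl : n = n' := by
      have := congrFun hval ⟨r - i, hlast⟩
      simpa [toTuple, Nat.add_sub_cancel' hir, blockIndex_of_forall_le hle,
        blockIndex_of_forall_le hle'] using this
    obtain rfl : kc = kc' := funext fun m => by
      rw [← blockStart_blockIndex hkc h0 (L := r + 1 - i) (by have := hle m; omega),
        ← blockStart_blockIndex hkc' h0' (L := r + 1 - i) (by have := hle' m; omega)]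
      exact congrArg (blockStart i · m) hval
    rfl
  · rintro ⟨mc, hmc⟩
    have htop : ∀ k, mc k ≤ mc ⟨r - i, hlast⟩ := fun k => hmc (show (k : ℕ) ≤ r - i by omega)
    refine ⟨⟨mc ⟨r - i, hlast⟩, fun m => blockStart i mc m, fun _ _ h => blockStart_mono i mc h,
      by simp [blockStart], fun m => ?_⟩,
      Subtype.ext (funext fun k => blockIndex_blockStart hmc (htop k))⟩
    have := (blockStart_le_iff (i := i) hmc m ⟨r - i, hlast⟩).2 m.is_le
    dsimp only at this ⊢
    omega

theorem prod_Ico_eq_prod_filter_fin {M : Type*} [CommMonoid M] (g : ℕ → M) {i L a b : ℕ}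
    (ha : i ≤ a) (hb : b ≤ i + L) :
    ∏ κ ∈ Ico a b, g κ
      = ∏ k ∈ univ.filter fun k : Fin L => a ≤ i + k ∧ i + k < b, g (i + k) := by
  symm
  refine prod_bij (fun k _ => i + k) (fun k hk => ?_)
    (fun _ _ _ _ h => Fin.ext (Nat.add_left_cancel h)) (fun κ hκ => ?_) fun _ _ => rfl
  · simpa using (mem_filter.1 hk).2
  · rw [mem_Ico] at hκ
    exact ⟨⟨κ - i, by omega⟩, by simp only [mem_filter, mem_univ, true_and]; omega,
      by simp; omega⟩

theorem starChainProd_eq_prod_polylogFactor (q : ℕ) (θ : F) (s : ℕ → ℕ) (u : ℕ → F)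
    {i r n : ℕ} {kc : Fin (n + 1) → ℕ} (hkc : Monotone kc) (h0 : kc 0 = i)
    (hle : ∀ m, kc m ≤ r) :
    starChainProd q θ s u r kc
      = ∏ k : Fin (r + 1 - i),
          polylogFactor q θ (u (i + k)) (s (i + k)) (blockIndex kc (i + k)) := by
  have hir : i ≤ r := h0 ▸ hle 0
  rw [starChainProd, ← prod_fiberwise_of_maps_to (t := range (n + 1))
    (g := fun k : Fin (r + 1 - i) => blockIndex kc (i + k))
    fun k _ => mem_range.2 (Nat.lt_succ_of_le (blockIndex_le kc _))]
  refine prod_congr rfl fun m hm => ?_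
  have hmn : m ≤ n := Nat.lt_succ_iff.1 (mem_range.1 hm)
  simp only [Nat.min_eq_left hmn]
  have hstart : i ≤ kc ⟨m, by omega⟩ := h0 ▸ hkc (Fin.zero_le _)
  rw [prod_Ico_eq_prod_filter_fin _ hstart (L := r + 1 - i) (by split <;> grind)]
  refine prod_congr (filter_congr fun k _ => ?_) fun k hk => ?_
  · have hlt := blockIndex_lt_iff hkc (κ := i + k) (h0 ▸ Nat.le_add_right i k) ⟨m, by omega⟩
    have hk := k.is_lt
    simp only at hlt
    split
    · have hlt' :=
        blockIndex_lt_iff hkc (κ := i + k) (h0 ▸ Nat.le_add_right i k) ⟨m + 1, by omega⟩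
      simp only at hlt'
      omega
    · have := blockIndex_le kc (i + k)
      omega
  · rw [(mem_filter.1 hk).2]
    rfl

theorem statement5_general
    {F : Type*} [NormedField F] [IsUltrametricDist F] [CompleteSpace F]
    (q : ℕ) (hq : IsPrimePow q) (θ : F) (hθ : ‖θ‖ = (q : ℝ))
    (r : ℕ) (s : ℕ → ℕ)
    (u : ℕ → F)
    (hu : ∀ k, 1 ≤ k → k ≤ r - 1 → ‖u k‖ ≤ (q : ℝ) ^ ((s k : ℝ) * (q : ℝ) / ((q : ℝ) - 1)))
    (hur : ‖u r‖ < (q : ℝ) ^ ((s r : ℝ) * (q : ℝ) / ((q : ℝ) - 1)))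
    (i : ℕ) (hi1 : 1 ≤ i) (hir : i ≤ r) :
    Summable (fun p : Σ n : ℕ,
        {kc : Fin (n + 1) → ℕ // Monotone kc ∧ kc 0 = i ∧ ∀ m, kc m ≤ r} =>
      starChainProd q θ s u r p.2.1)
    ∧ Summable (fun mc : {mc : Fin (r + 1 - i) → ℕ // Monotone mc} =>
        ∏ k : Fin (r + 1 - i),
          PowerSeries.C (u (i + (k : ℕ)) ^ q ^ mc.1 k) * (LL q θ (mc.1 k) ^ s (i + (k : ℕ)))⁻¹)
    ∧ (∑' p : Σ n : ℕ,
          {kc : Fin (n + 1) → ℕ // Monotone kc ∧ kc 0 = i ∧ ∀ m, kc m ≤ r},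
          starChainProd q θ s u r p.2.1)
        = ∑' mc : {mc : Fin (r + 1 - i) → ℕ // Monotone mc},
            ∏ k : Fin (r + 1 - i),
              PowerSeries.C (u (i + (k : ℕ)) ^ q ^ mc.1 k)
                * (LL q θ (mc.1 k) ^ s (i + (k : ℕ)))⁻¹ := by
  have hlast : r - i < r + 1 - i := by omega
  have hsum : Summable fun mc : {mc : Fin (r + 1 - i) → ℕ // Monotone mc} =>
      ∏ k : Fin (r + 1 - i), polylogFactor q θ (u (i + k)) (s (i + k)) (mc.1 k) := by
    refine summable_prod_polylogFactor hq.two_le hθ (ι := Fin (r + 1 - i))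
      (t := ⟨r - i, hlast⟩)
      (fun k => show (k : ℕ) ≤ r - i by omega) _ _ (fun k hk => hu _ (by omega) ?_)
      (by rwa [Nat.add_sub_cancel' hir])
    have : (k : ℕ) ≠ r - i := fun h => hk (Fin.ext h)
    omega
  let e := Equiv.ofBijective _ (StarChain.toTuple_bijective hir)
  have hterm : ∀ p : StarChain i r, starChainProd q θ s u r p.2.1
      = ∏ k : Fin (r + 1 - i), polylogFactor q θ (u (i + k)) (s (i + k)) ((e p).1 k) :=
    fun ⟨_, _, hkc, h0, hle⟩ => starChainProd_eq_prod_polylogFactor q θ s u hkc h0 hle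
  refine ⟨(e.summable_iff.2 hsum).congr fun p => (hterm p).symm, hsum, ?_⟩
  rw [tsum_congr hterm]
  exact e.tsum_eq fun mc =>
    ∏ k : Fin (r + 1 - i), polylogFactor q θ (u (i + k)) (s (i + k)) (mc.1 k)

/-- summation identity `Σ_{n≥0} β_{n,i} = 𝔏i⋆` in the proof of
Theorem 3.3 of the paper.  The family indexed by pairs `(n, (k_0,…,k_n))` with
`i = k_0 ≤ k_1 ≤ ⋯ ≤ k_n ≤ r` of the elements
`Π_{m=0}^{n} Π_{k_m ≤ k < k_{m+1}} u_k^{q^m}(𝕃_m^{s_k})⁻¹` (with `k_{n+1} := r+1`) is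
summable in `F[[t]]`, with sum the t-motivic Carlitz multiple star polylogarithm
`𝔏i⋆_{(s_r,…,s_i),(u_r,…,u_i)} = Σ_{0 ≤ m_i ≤ ⋯ ≤ m_r} Π_{k=i}^{r} u_k^{q^{m_k}}(𝕃_{m_k}^{s_k})⁻¹`,
whose defining family is likewise summable. -/
theorem statement5
    {F : Type*} [NormedField F] [IsUltrametricDist F] [CompleteSpace F]
    (q : ℕ) (hq : IsPrimePow q) (θ : F) (hθ : ‖θ‖ = (q : ℝ))
    (r : ℕ) (hr : 1 ≤ r) (s : ℕ → ℕ) (hs : ∀ k, 1 ≤ k → k ≤ r → 0 < s k)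
    (u : ℕ → F)
    (hu : ∀ k, 1 ≤ k → k ≤ r - 1 → ‖u k‖ ≤ (q : ℝ) ^ ((s k : ℝ) * (q : ℝ) / ((q : ℝ) - 1)))
    (hur : ‖u r‖ < (q : ℝ) ^ ((s r : ℝ) * (q : ℝ) / ((q : ℝ) - 1)))
    (i : ℕ) (hi1 : 1 ≤ i) (hir : i ≤ r) :
    Summable (fun p : Σ n : ℕ,
        {kc : Fin (n + 1) → ℕ // Monotone kc ∧ kc 0 = i ∧ ∀ m, kc m ≤ r} =>
      starChainProd q θ s u r p.2.1)
    ∧ Summable (fun mc : {mc : Fin (r + 1 - i) → ℕ // Monotone mc} =>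
        ∏ k : Fin (r + 1 - i),
          PowerSeries.C (u (i + (k : ℕ)) ^ q ^ mc.1 k) * (LL q θ (mc.1 k) ^ s (i + (k : ℕ)))⁻¹)
    ∧ (∑' p : Σ n : ℕ,
          {kc : Fin (n + 1) → ℕ // Monotone kc ∧ kc 0 = i ∧ ∀ m, kc m ≤ r},
          starChainProd q θ s u r p.2.1)
        = ∑' mc : {mc : Fin (r + 1 - i) → ℕ // Monotone mc},
            ∏ k : Fin (r + 1 - i),
              PowerSeries.C (u (i + (k : ℕ)) ^ q ^ mc.1 k)
                * (LL q θ (mc.1 k) ^ s (i + (k : ℕ)))⁻¹ :=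
  statement5_general q hq θ hθ r s u hu hur i hi1 hir
end
end

section
/- Let 𝔰 = (s_1,…,s_r) be a tuple of positive integers and let u_1,…,u_r ∈ F be nonzero elements with |u_1| < q^{s_1·q/(q−1)} and |u_k| ≤ q^{s_k·q/(q−1)} for 2 ≤ k ≤ r. Then the family (u_1^{q^{i_1}}⋯u_r^{q^{i_r}}/(L_{i_1}^{s_1}⋯L_{i_r}^{s_r})), indexed by integers i_1 ≥ i_2 ≥ ⋯ ≥ i_r ≥ 0, is summable in F, and its sum Li⋆_𝔰(u) satisfies |Li⋆_𝔰(u)| = |u_1·u_2⋯u_r|; in particular Li⋆_𝔰(u) ≠ 0. (This is the nonvanishing remark for Carlitz multiple star polylogarithms in Section 5.2 of the paper.) -/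
/-!
Since `‖θ‖ = q` and the norm is nonarchimedean, `‖θ - θ^{q^m}‖ = q^{q^m}`, so
`‖L_i‖ = q^{q(q^i - 1)/(q - 1)}` and the `k`-th factor of a term has norm
`‖u_k‖ · ρ_k^{q^{i_k} - 1}`, where `ρ_k = ‖u_k‖ / R_k` and `R_k = q^{s_k q/(q-1)}`
(`carlitzRadius`). All `ρ_k ≤ 1` and `ρ_1 < 1`, so the terms are bounded by
`∏ ‖u_k‖ · ρ_1^{q^{i_1} - 1}`: they tend to `0`, which gives convergence in the complete
nonarchimedean field `F`, and every term but the one at `i = 0` (of norm `∏ ‖u_k‖`) has norm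
at most `ρ_1 ∏ ‖u_k‖`. The strict ultrametric inequality then gives the norm of the sum.
-/

open Filter Topology

noncomputable section

variable {F : Type*} [NormedField F]

/-- `L_i = (θ-θ^q)⋯(θ-θ^{q^i})`, with `L_0 = 1`. -/
def LF (q : ℕ) (θ : F) (i : ℕ) : F :=
  ∏ m ∈ Finset.range i, (θ - θ ^ q ^ (m + 1))

namespace IsUltrametricDist

variable {ι E : Type*} [NormedAddCommGroup E] [IsUltrametricDist E]

theorem summable_of_norm_le_mul_pow [CompleteSpace E] {f : ι → E} {g : ι → ℕ}
    (hg : Tendsto g cofinite atTop) {C ρ : ℝ} (hρ₀ : 0 ≤ ρ) (hρ₁ : ρ < 1)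
    (hf : ∀ i, ‖f i‖ ≤ C * ρ ^ g i) : Summable f := by
  refine NonarchimedeanAddGroup.summable_of_tendsto_cofinite_zero
    (tendsto_zero_iff_norm_tendsto_zero.mpr (squeeze_zero (fun i => norm_nonneg _) hf ?_))
  simpa using ((tendsto_pow_atTop_nhds_zero_of_lt_one hρ₀ hρ₁).comp hg).const_mul C

theorem norm_tsum_eq_of_forall_ne_le {f : ι → E} (hf : Summable f) (i₀ : ι) {C : ℝ}
    (hC₀ : 0 ≤ C) (hC : C < ‖f i₀‖) (hle : ∀ i ≠ i₀, ‖f i‖ ≤ C) :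
    ‖∑' i, f i‖ = ‖f i₀‖ := by
  classical
  have hrest : ‖∑' i, if i = i₀ then 0 else f i‖ ≤ C := by
    refine norm_tsum_le_of_forall_le_of_nonneg hC₀ fun i => ?_
    split_ifs with h
    · simpa using hC₀
    · exact hle i h
  rw [hf.tsum_eq_add_tsum_ite i₀, norm_add_eq_max_of_norm_ne_norm (hrest.trans_lt hC).ne',
    max_eq_left (hrest.trans hC.le)]

end IsUltrametricDist

section Antitone

variable {ι : Type*} [Preorder ι] {k₀ : ι}

theorem Antitone.eq_zero_of_isBot {i : ι → ℕ} (hi : Antitone i) (hk₀ : IsBot k₀)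
    (h : i k₀ = 0) : i = 0 :=
  funext fun k => Nat.eq_zero_of_le_zero (h ▸ hi (hk₀ k))

theorem tendsto_apply_isBot_cofinite [Finite ι] (hk₀ : IsBot k₀) :
    Tendsto (fun i : {i : ι → ℕ // Antitone i} => i.1 k₀) cofinite atTop := by
  refine tendsto_atTop.mpr fun b => eventually_cofinite.mpr ?_
  refine ((Set.Finite.pi fun _ => Set.finite_Iio b).preimage
    Subtype.val_injective.injOn).subset fun i hi k _ => ?_
  exact (i.2 (hk₀ k)).trans_lt (not_le.mp hi)

end Antitone

def carlitzRadius (q c : ℕ) : ℝ := (q : ℝ) ^ ((c : ℝ) * (q : ℝ) / ((q : ℝ) - 1))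

theorem carlitzRadius_pos {q : ℕ} (hq : 0 < q) (c : ℕ) : 0 < carlitzRadius q c :=
  Real.rpow_pos_of_pos (Nat.cast_pos.mpr hq) _

section Norms

variable [IsUltrametricDist F] {q : ℕ} (hq : 2 ≤ q) {θ : F} (hθ : ‖θ‖ = (q : ℝ))
include hq hθ

theorem norm_LF (i : ℕ) :
    ‖LF q θ i‖ = (q : ℝ) ^ (∑ m ∈ Finset.range i, q ^ (m + 1)) := by
  rw [LF, norm_prod, ← Finset.prod_pow_eq_pow_sum]
  refine Finset.prod_congr rfl fun m _ => ?_
  have hlt : ‖θ‖ < ‖θ ^ q ^ (m + 1)‖ := by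
    rw [norm_pow, hθ]
    simpa using pow_lt_pow_right₀ (by exact_mod_cast hq : (1 : ℝ) < q)
      (Nat.one_lt_pow m.succ_ne_zero hq)
  rw [sub_eq_add_neg, IsUltrametricDist.norm_add_eq_max_of_norm_ne_norm
    (by rw [norm_neg]; exact hlt.ne), norm_neg, max_eq_right hlt.le, norm_pow, hθ]

theorem norm_LF_pow (c i : ℕ) : ‖LF q θ i‖ ^ c = carlitzRadius q c ^ (q ^ i - 1) := by
  have hq₁ : (1 : ℝ) < q := by exact_mod_cast hq
  rw [norm_LF hq hθ, carlitzRadius, ← pow_mul, ← Real.rpow_natCast, ← Real.rpow_natCast,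
    ← Real.rpow_mul (by positivity)]
  congr 1
  have hsum : ((∑ m ∈ Finset.range i, q ^ (m + 1) : ℕ) : ℝ)
      = (q : ℝ) * (((q : ℝ) ^ i - 1) / ((q : ℝ) - 1)) := by
    push_cast
    rw [← geom_sum_eq hq₁.ne', Finset.mul_sum]
    simp only [pow_succ']
  have hne : (q : ℝ) - 1 ≠ 0 := sub_ne_zero.mpr hq₁.ne'
  push_cast [hsum, Nat.cast_sub (Nat.one_le_pow i q (by omega))]
  field_simp

theorem norm_pow_div_LF_pow (u : F) (c i : ℕ) :
    ‖u ^ q ^ i / LF q θ i ^ c‖ = ‖u‖ * (‖u‖ / carlitzRadius q c) ^ (q ^ i - 1) := by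
  obtain ⟨n, hn⟩ : ∃ n, q ^ i = n + 1 := Nat.exists_eq_add_one.mpr (by positivity)
  rw [norm_div, norm_pow, norm_pow, norm_LF_pow hq hθ, div_pow, hn, Nat.add_sub_cancel,
    pow_succ]
  ring

theorem norm_prod_pow_div_LF_pow_le {κ : Type*} [Fintype κ] (s : κ → ℕ) (u : κ → F)
    (hu : ∀ k, ‖u k‖ ≤ carlitzRadius q (s k)) (i : κ → ℕ) (k₀ : κ) :
    ‖∏ k, u k ^ q ^ i k / LF q θ (i k) ^ s k‖
      ≤ (∏ k, ‖u k‖) * (‖u k₀‖ / carlitzRadius q (s k₀)) ^ (q ^ i k₀ - 1) := by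
  classical
  set ρ := fun k => (‖u k‖ / carlitzRadius q (s k)) ^ (q ^ i k - 1)
  have hR : ∀ k, 0 < carlitzRadius q (s k) := fun k => carlitzRadius_pos (by omega) _
  have hρ₀ : ∀ k, 0 ≤ ρ k := fun k => pow_nonneg (div_nonneg (norm_nonneg _) (hR k).le) _
  have hρ₁ : ∀ k, ρ k ≤ 1 := fun k =>
    pow_le_one₀ (div_nonneg (norm_nonneg _) (hR k).le) ((div_le_one (hR k)).mpr (hu k))
  rw [norm_prod, Finset.prod_congr rfl fun k _ => norm_pow_div_LF_pow hq hθ (u k) (s k) (i k),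
    Finset.prod_mul_distrib, ← Finset.mul_prod_erase _ ρ (Finset.mem_univ k₀)]
  gcongr
  exact mul_le_of_le_one_right (hρ₀ k₀)
    (Finset.prod_le_one (fun k _ => hρ₀ k) fun k _ => hρ₁ k)

end Norms

theorem statement7_general
    {F : Type*} [NormedField F] [IsUltrametricDist F] [CompleteSpace F]
    (q : ℕ) (hq : IsPrimePow q) (θ : F) (hθ : ‖θ‖ = (q : ℝ))
    {r : ℕ} (hr : 0 < r) (s : Fin r → ℕ)
    (u : Fin r → F) (hu0 : ∀ k, u k ≠ 0)
    (h1 : ‖u ⟨0, hr⟩‖ < (q : ℝ) ^ ((s ⟨0, hr⟩ : ℝ) * (q : ℝ) / ((q : ℝ) - 1)))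
    (hk : ∀ k : Fin r, k ≠ ⟨0, hr⟩ →
      ‖u k‖ ≤ (q : ℝ) ^ ((s k : ℝ) * (q : ℝ) / ((q : ℝ) - 1))) :
    Summable (fun i : {i : Fin r → ℕ // Antitone i} =>
      ∏ k, u k ^ q ^ i.1 k / LF q θ (i.1 k) ^ s k)
    ∧ ‖∑' i : {i : Fin r → ℕ // Antitone i},
          ∏ k, u k ^ q ^ i.1 k / LF q θ (i.1 k) ^ s k‖ = ∏ k, ‖u k‖
    ∧ (∑' i : {i : Fin r → ℕ // Antitone i},
          ∏ k, u k ^ q ^ i.1 k / LF q θ (i.1 k) ^ s k) ≠ 0 := by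
  have hq₂ : 2 ≤ q := hq.two_le
  set k₀ : Fin r := ⟨0, hr⟩
  have hk₀ : IsBot k₀ := fun k => Fin.le_def.mpr (Nat.zero_le _)
  have hu : ∀ k, ‖u k‖ ≤ carlitzRadius q (s k) := fun k =>
    if h : k = k₀ then h ▸ h1.le else hk k h
  set ρ := ‖u k₀‖ / carlitzRadius q (s k₀)
  have hρ₀ : 0 ≤ ρ := div_nonneg (norm_nonneg _) (carlitzRadius_pos (by omega) _).le
  have hρ₁ : ρ < 1 := (div_lt_one (carlitzRadius_pos (by omega) _)).mpr h1
  set B := ∏ k, ‖u k‖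
  have hB : 0 < B := Finset.prod_pos fun k _ => norm_pos_iff.mpr (hu0 k)
  have hbound (i : {i : Fin r → ℕ // Antitone i}) :=
    norm_prod_pow_div_LF_pow_le hq₂ hθ s u hu i.1 k₀
  have hsum := IsUltrametricDist.summable_of_norm_le_mul_pow ((tendsto_sub_atTop_nat 1).comp
    ((tendsto_pow_atTop_atTop_of_one_lt hq.one_lt).comp (tendsto_apply_isBot_cofinite hk₀)))
    hρ₀ hρ₁ hbound
  set i₀ : {i : Fin r → ℕ // Antitone i} := ⟨0, antitone_const⟩
  have hsmall (i) (hi : i ≠ i₀) :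
      ‖∏ k, u k ^ q ^ i.1 k / LF q θ (i.1 k) ^ s k‖ ≤ B * ρ := by
    have hq_le : q ≤ q ^ i.1 k₀ :=
      le_self_pow₀ (by omega) fun h => hi (Subtype.ext (i.2.eq_zero_of_isBot hk₀ h))
    refine (hbound i).trans (mul_le_mul_of_nonneg_left ?_ hB.le)
    exact (pow_le_pow_of_le_one hρ₀ hρ₁.le (by omega)).trans_eq (pow_one ρ)
  have hi₀ : ‖∏ k, u k ^ q ^ i₀.1 k / LF q θ (i₀.1 k) ^ s k‖ = B := by simp [i₀, LF, B]
  have hnorm := IsUltrametricDist.norm_tsum_eq_of_forall_ne_le hsum i₀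
    (mul_nonneg hB.le hρ₀) (by rw [hi₀]; exact mul_lt_of_lt_one_right hB hρ₁) hsmall
  rw [hi₀] at hnorm
  exact ⟨hsum, hnorm, norm_ne_zero_iff.mp (hnorm ▸ hB.ne')⟩

/-- nonvanishing remark for Carlitz multiple star polylogarithms,
Section 5.2 of the paper.  For nonzero `u_1,…,u_r` with `|u_1| < q^{s_1 q/(q−1)}` and
`|u_k| ≤ q^{s_k q/(q−1)}` for `2 ≤ k ≤ r`, the family
`(u_1^{q^{i_1}}⋯u_r^{q^{i_r}}/(L_{i_1}^{s_1}⋯L_{i_r}^{s_r}))_{i_1 ≥ ⋯ ≥ i_r ≥ 0}` is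
summable in `F`, and `|Li⋆_𝔰(u)| = |u_1 u_2 ⋯ u_r|`; in particular `Li⋆_𝔰(u) ≠ 0`. -/
theorem statement7
    {F : Type*} [NormedField F] [IsUltrametricDist F] [CompleteSpace F]
    (q : ℕ) (hq : IsPrimePow q) (θ : F) (hθ : ‖θ‖ = (q : ℝ))
    {r : ℕ} (hr : 0 < r) (s : Fin r → ℕ) (hs : ∀ k, 0 < s k)
    (u : Fin r → F) (hu0 : ∀ k, u k ≠ 0)
    (h1 : ‖u ⟨0, hr⟩‖ < (q : ℝ) ^ ((s ⟨0, hr⟩ : ℝ) * (q : ℝ) / ((q : ℝ) - 1)))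
    (hk : ∀ k : Fin r, k ≠ ⟨0, hr⟩ →
      ‖u k‖ ≤ (q : ℝ) ^ ((s k : ℝ) * (q : ℝ) / ((q : ℝ) - 1))) :
    Summable (fun i : {i : Fin r → ℕ // Antitone i} =>
      ∏ k, u k ^ q ^ i.1 k / LF q θ (i.1 k) ^ s k)
    ∧ ‖∑' i : {i : Fin r → ℕ // Antitone i},
          ∏ k, u k ^ q ^ i.1 k / LF q θ (i.1 k) ^ s k‖ = ∏ k, ‖u k‖
    ∧ (∑' i : {i : Fin r → ℕ // Antitone i},
          ∏ k, u k ^ q ^ i.1 k / LF q θ (i.1 k) ^ s k) ≠ 0 :=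
  statement7_general q hq θ hθ hr s u hu0 h1 hk
end
end

section
/- Let p be a prime, q a power of p, and F a perfect field of characteristic p; for a polynomial P ∈ F[t], write P^{(−1)} for the polynomial obtained by applying the inverse of the q-power Frobenius of F to each coefficient of P. Let θ ∈ F, let r ≥ 1 and s_1,…,s_r be positive integers, set d_i := s_i+⋯+s_r, and let Q_1,…,Q_{r−1} ∈ F[t]. Let Φ′ ∈ Mat_{r×r}(F[t]) be the matrix with diagonal entries Φ′_{ii} = (t−θ)^{d_i} for 1 ≤ i ≤ r, subdiagonal entries Φ′_{i+1,i} = Q_i^{(−1)}·(t−θ)^{d_i} for 1 ≤ i ≤ r−1, and all other entries 0. Then for every 1 ≤ i ≤ r and every integer N ≥ d_i there exists a row vector a ∈ Mat_{1×r}(F[t]) such that a^{(−1)}·Φ′ = (t−θ)^N·e_i, where a^{(−1)} applies the inverse Frobenius to every coefficient of every entry of a, and e_i is the i-th standard basis row vector. (This is Proposition 2.? (P: delta0) of the paper: (t−θ)^N·m_i ∈ σM′ for all N ≥ d_i, for the dual t-motive M′ defined by Φ′.) -/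
/-!
`Φ′` factors as `U · diag((t−θ)^{d_k})` with `U` lower triangular with ones on the diagonal
(its subdiagonal entries are the `Q_k^{(−1)}`). Hence `U` is invertible over `F[t]`, and
`(t−θ)^{N−d_i} e_i U⁻¹` is a row vector whose product with `Φ′` is `(t−θ)^N e_i`. Since the
inverse Frobenius is surjective, this vector is of the form `a^{(−1)}`.
-/

namespace Matrix

variable {R : Type*} [CommRing R] {n : Type*} [Fintype n] [DecidableEq n] {r : ℕ}

theorem isUnit_det_of_isLowerTriangular_of_diag_eq_one [LinearOrder n] {U : Matrix n n R}
    (hU : U.IsLowerTriangular) (hdiag : ∀ k, U k k = 1) : IsUnit U.det := by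
  simp [det_of_isLowerTriangular U hU, hdiag]

theorem exists_vecMul_mul_diagonal_eq_single {U : Matrix n n R} (hU : IsUnit U.det)
    (D : n → R) (i : n) (c : R) :
    ∃ v : n → R, v ᵥ* (U * diagonal D) = Pi.single i (c * D i) := by
  refine ⟨Pi.single i c ᵥ* U⁻¹, funext fun k => ?_⟩
  rw [vecMul_vecMul, ← Matrix.mul_assoc, nonsing_inv_mul U hU, Matrix.one_mul,
    vecMul_diagonal, Pi.single_apply, Pi.single_apply]
  split_ifs with hk <;> simp [hk]

def unipotentLowerBidiagonal (ℓ : Fin r → R) : Matrix (Fin r) (Fin r) R :=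
  fun a b => if a = b then 1 else if (a : ℕ) = b + 1 then ℓ b else 0

theorem unipotentLowerBidiagonal_isLowerTriangular (ℓ : Fin r → R) :
    (unipotentLowerBidiagonal ℓ).IsLowerTriangular := by
  intro a b hab
  have hab : (a : ℕ) < b := hab
  simp only [unipotentLowerBidiagonal]
  rw [if_neg (by omega), if_neg (by omega)]

theorem isUnit_det_unipotentLowerBidiagonal (ℓ : Fin r → R) :
    IsUnit (unipotentLowerBidiagonal ℓ).det :=
  isUnit_det_of_isLowerTriangular_of_diag_eq_one
    (unipotentLowerBidiagonal_isLowerTriangular ℓ) fun _ => if_pos rfl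

theorem eq_unipotentLowerBidiagonal_mul_diagonal {Φ : Matrix (Fin r) (Fin r) R}
    (D ℓ : Fin r → R)
    (hΦ : ∀ a b, Φ a b = if a = b then D a else if (a : ℕ) = b + 1 then ℓ b * D b else 0) :
    Φ = unipotentLowerBidiagonal ℓ * diagonal D := by
  ext a b
  rw [mul_diagonal, hΦ, unipotentLowerBidiagonal]
  split_ifs with h <;> simp [h]

end Matrix

open Matrix

theorem statement10_general
    (q : ℕ)
    {F : Type*} [Field F]
    (σ : F →+* F) (hσ₂ : ∀ x : F, σ (x ^ q) = x)
    (θ : F) {r : ℕ}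
    (d : Fin r → ℕ)
    (Q : Fin r → Polynomial F)
    (Φ : Matrix (Fin r) (Fin r) (Polynomial F))
    (hΦ : ∀ a b : Fin r, Φ a b =
      if a = b then (Polynomial.X - Polynomial.C θ) ^ d a
      else if (a : ℕ) = (b : ℕ) + 1 then
        (Q b).map σ * (Polynomial.X - Polynomial.C θ) ^ d b
      else 0) :
    ∀ i : Fin r, ∀ N : ℕ, d i ≤ N →
      ∃ a : Fin r → Polynomial F,
        Matrix.vecMul (fun k => (a k).map σ) Φ =
          fun k => if k = i then (Polynomial.X - Polynomial.C θ) ^ N else 0 := by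
  intro i N hN
  set P := Polynomial.X - Polynomial.C θ
  set ℓ := fun k => (Q k).map σ
  have hfactor := eq_unipotentLowerBidiagonal_mul_diagonal (fun k => P ^ d k) ℓ hΦ
  obtain ⟨v, hv⟩ := exists_vecMul_mul_diagonal_eq_single
    (isUnit_det_unipotentLowerBidiagonal ℓ) (fun k => P ^ d k) i (P ^ (N - d i))
  have hσ_surj : Function.Surjective σ := fun x => ⟨x ^ q, hσ₂ x⟩
  obtain ⟨a, rfl⟩ := (Polynomial.map_surjective σ hσ_surj).comp_left v
  refine ⟨a, ?_⟩
  change (Polynomial.map σ ∘ a) ᵥ* Φ = _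
  rw [hfactor, hv, ← pow_add, Nat.sub_add_cancel hN]
  exact funext fun k => Pi.single_apply i _ k

/-- Proposition "P: delta0" of the paper: `(t−θ)^N·m_i ∈ σM′` for all
`N ≥ d_i`.  `F` is a perfect field of characteristic `p`, `q = p^e`, and `σ : F →+* F` is
the inverse of the `q`-power Frobenius (so `σ(x)^q = x` and `σ(x^q) = x`); `P^{(−1)}` is
`σ` applied coefficientwise, i.e. `P.map σ`.  `Φ′` has diagonal entries `(t−θ)^{d_i}`,
subdiagonal entries `Φ′_{i+1,i} = Q_i^{(−1)}(t−θ)^{d_i}`, and zeros elsewhere (indices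
`0`-based: row `b+1`, column `b` carries `(Q b).map σ · (t−θ)^{d b}`).  Then for every `i`
and every `N ≥ d_i` there is a row vector `a` with `a^{(−1)} ⬝ Φ′ = (t−θ)^N e_i`. -/
theorem statement10
    (p : ℕ) (hp : p.Prime) (e : ℕ) (he : 1 ≤ e) (q : ℕ) (hq : q = p ^ e)
    {F : Type*} [Field F] [CharP F p]
    (σ : F →+* F) (hσ₁ : ∀ x : F, σ x ^ q = x) (hσ₂ : ∀ x : F, σ (x ^ q) = x)
    (θ : F) {r : ℕ} (hr : 0 < r)
    (s : Fin r → ℕ) (hs : ∀ k, 0 < s k)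
    (d : Fin r → ℕ) (hd : ∀ a, d a = ∑ k ∈ Finset.Ici a, s k)
    (Q : Fin r → Polynomial F)
    (Φ : Matrix (Fin r) (Fin r) (Polynomial F))
    (hΦ : ∀ a b : Fin r, Φ a b =
      if a = b then (Polynomial.X - Polynomial.C θ) ^ d a
      else if (a : ℕ) = (b : ℕ) + 1 then
        (Q b).map σ * (Polynomial.X - Polynomial.C θ) ^ d b
      else 0) :
    ∀ i : Fin r, ∀ N : ℕ, d i ≤ N →
      ∃ a : Fin r → Polynomial F,
        Matrix.vecMul (fun k => (a k).map σ) Φ =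
          fun k => if k = i then (Polynomial.X - Polynomial.C θ) ^ N else 0 :=
  statement10_general q σ hσ₂ θ d Q Φ hΦ
end

section
/- Let F be a field with a nonarchimedean multiplicative absolute value |·| and θ ∈ F with |θ| = q > 1. Let (b_i)_{i≥0} be a sequence in F with |b_i|·q^i → 0 as i → ∞. Suppose that for every i ≥ 0 the family (C(j,i)·b_j·θ^{j−i})_{j≥i} — where the binomial coefficient C(j,i) ∈ ℕ is regarded in F via the canonical map ℕ → F — is summable with sum 0. Then b_i = 0 for all i ≥ 0. (This is the injectivity of the map η : 𝕋_θ → F[[t−θ]], Σ b_i t^i ↦ Σ_i (Σ_{j≥i} C(j,i) b_j θ^{j−i})·(t−θ)^i, proved in Section 2.4 of the paper.) -/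
open Filter Topology

/-!
Put `c i = b i θ^i`, so that `‖c i‖ = ‖b i‖ qⁱ → 0`. Multiplying the `i`-th relation by `θⁱ`
isolates `c i = -∑_{n ≥ 1} C(i+n, i) c (i+n)`, and since `‖C(i+n, i)‖ ≤ 1` in an ultrametric
field, `‖c i‖` is bounded by every bound on the tail `‖c (i+n+1)‖`. A sequence tending to `0`
with this property vanishes: once the tail lies below `ε`, descending induction pushes `ε` down
to every index.
-/

lemma nonpos_of_tendsto_zero_of_le_of_tail_le {a : ℕ → ℝ} (ha : Tendsto a atTop (𝓝 0))
    (h : ∀ i ε, (∀ n, a (i + n + 1) ≤ ε) → a i ≤ ε) (i : ℕ) : a i ≤ 0 := by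
  refine le_of_forall_pos_le_add fun ε hε => ?_
  obtain ⟨N, hN⟩ := eventually_atTop.1 (ha.eventually (ge_mem_nhds hε))
  suffices ∀ k j, N ≤ j + k → a j ≤ ε by simpa using this N i (by omega)
  intro k
  induction k with
  | zero => exact fun j hj => hN j hj
  | succ k ih =>
    intro j hj
    by_cases hNj : N ≤ j
    · exact hN j hNj
    · exact h j ε fun n => ih _ (by omega)

lemma norm_le_of_hasSum_choose_mul_eq_zero {F : Type*} [NormedField F] [IsUltrametricDist F]
    {c : ℕ → F} {i : ℕ} (h : HasSum (fun n => ((i + n).choose i : F) * c (i + n)) 0) {ε : ℝ}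
    (hε : ∀ n, ‖c (i + n + 1)‖ ≤ ε) : ‖c i‖ ≤ ε := by
  have htail : HasSum (fun n => ((i + (n + 1)).choose i : F) * c (i + (n + 1))) (-c i) := by
    simpa using (hasSum_nat_add_iff' 1).2 h
  rw [← norm_neg, ← htail.tsum_eq]
  refine IsUltrametricDist.norm_tsum_le_of_forall_le fun n => ?_
  calc ‖((i + (n + 1)).choose i : F) * c (i + (n + 1))‖ ≤ ‖c (i + (n + 1))‖ := by
        rw [norm_mul]
        exact mul_le_of_le_one_left (norm_nonneg _) (IsUltrametricDist.norm_natCast_le_one F _)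
    _ ≤ ε := hε n

theorem statement12_general
    {F : Type*} [NormedField F] [IsUltrametricDist F]
    (q : ℕ) (hq : IsPrimePow q) (θ : F) (hθ : ‖θ‖ = (q : ℝ))
    (b : ℕ → F)
    (hb : Tendsto (fun i => ‖b i‖ * (q : ℝ) ^ i) atTop (nhds 0))
    (hsum : ∀ i : ℕ,
      HasSum (fun n : ℕ => (((i + n).choose i : ℕ) : F) * b (i + n) * θ ^ n) 0) :
    ∀ i, b i = 0 := by
  have hθ0 : θ ≠ 0 := by
    rw [← norm_pos_iff, hθ]
    exact_mod_cast hq.pos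
  set c : ℕ → F := fun i => b i * θ ^ i with hc
  have hc_norm : (fun i => ‖c i‖) = fun i => ‖b i‖ * (q : ℝ) ^ i := by
    simp [hc, norm_pow, hθ]
  have hc_sum (i : ℕ) : HasSum (fun n => ((i + n).choose i : F) * c (i + n)) 0 := by
    simpa [hc, pow_add, mul_assoc, mul_comm, mul_left_comm] using (hsum i).mul_right (θ ^ i)
  have hc_zero (i : ℕ) : ‖c i‖ ≤ 0 :=
    nonpos_of_tendsto_zero_of_le_of_tail_le (a := fun i => ‖c i‖) (hc_norm ▸ hb)
      (fun j _ => norm_le_of_hasSum_choose_mul_eq_zero (hc_sum j)) i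
  intro i
  simpa [hc, hθ0] using norm_le_zero_iff.1 (hc_zero i)

/-- injectivity of `η : 𝕋_θ → F[[t−θ]]`, Section 2.4 of the paper.
If `(b_i)` satisfies `|b_i| q^i → 0` and for every `i` the family
`(C(j,i)·b_j·θ^{j−i})_{j≥i}` (reindexed by `j = i + n`) is summable with sum `0`, then
all the `b_i` vanish. -/
theorem statement12
    {F : Type*} [NormedField F] [IsUltrametricDist F] [CompleteSpace F]
    (q : ℕ) (hq : IsPrimePow q) (θ : F) (hθ : ‖θ‖ = (q : ℝ))
    (b : ℕ → F)
    (hb : Tendsto (fun i => ‖b i‖ * (q : ℝ) ^ i) atTop (nhds 0))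
    (hsum : ∀ i : ℕ,
      HasSum (fun n : ℕ => (((i + n).choose i : ℕ) : F) * b (i + n) * θ ^ n) 0) :
    ∀ i, b i = 0 :=
  statement12_general q hq θ hθ b hb hsum
end

section
/- Suppose F is complete. (i) If (b_j)_{j≥0} is a sequence in F with |b_j|·q^j → 0, then for every i ≥ 0 the family (C(j,i)·b_j·θ^{j−i})_{j≥i} (binomial coefficients regarded in F via ℕ → F) is summable, and its sum a_i satisfies |a_i|·q^i ≤ sup_{j≥i} |b_j|·q^j; in particular |a_i|·q^i → 0 as i → ∞. (ii) Conversely, for every sequence (a_i)_{i≥0} in F with |a_i|·q^i → 0 there exists a unique sequence (b_j)_{j≥0} with |b_j|·q^j → 0 such that a_i = Σ_{j≥i} C(j,i)·b_j·θ^{j−i} for all i ≥ 0. (This identifies the image of the map η : 𝕋_θ → F[[t−θ]] as {Σ b_i(t−θ)^i : |b_i|·q^i → 0}, as asserted in Section 2.4 of the paper.) -/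
/-!
The numbers `a_i` are the coefficients of `f(t + θ)` where `f = ∑ b_j t^j`, i.e. the Taylor shift
of `b` by `θ`. Binomial coefficients have norm at most `1` in an ultrametric field, so the `n`-th
term of `a_i` has norm at most `|b_{i+n}| q^{i+n} / q^i`; this gives summability and the bound in
(i). Taylor shifts compose additively, shifting by `x` after `y` is shifting by `x + y` (the
binomial theorem on each antidiagonal, the rearrangement being justified by the same estimate), so
on sequences with `|b_j| q^j → 0` the shift by `-θ` is inverse to the shift by `θ`. This gives
existence and uniqueness in (ii).
-/

open Filter Topology Finset

lemma le_ciSup_tail {f : ℕ → ℝ} (hf : BddAbove (Set.range f)) {i j : ℕ} (hij : i ≤ j) :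
    f j ≤ ⨆ k : {k : ℕ // i ≤ k}, f k :=
  le_ciSup (hf.mono (Set.range_comp_subset_range Subtype.val f)) ⟨j, hij⟩

lemma tendsto_iSup_tail_zero {f : ℕ → ℝ} (hf : Tendsto f atTop (𝓝 0)) (hf0 : 0 ≤ f) :
    Tendsto (fun i => ⨆ k : {k : ℕ // i ≤ k}, f k) atTop (𝓝 0) := by
  refine tendsto_order.2 ⟨fun a ha => .of_forall fun i =>
    ha.trans_le (Real.iSup_nonneg fun k => hf0 k), fun a ha => ?_⟩
  obtain ⟨N, hN⟩ := eventually_atTop.1 ((tendsto_order.1 hf).2 (a / 2) (half_pos ha))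
  exact eventually_atTop.2 ⟨N, fun i hi =>
    (Real.iSup_le (fun k : {k : ℕ // i ≤ k} => (hN k (hi.trans k.2)).le) (half_pos ha).le).trans_lt (half_lt_self ha)⟩

lemma tendsto_norm_mul_pow_shift {E : Type*} [SeminormedAddCommGroup E] {b : ℕ → E} {r : ℝ}
    (hb : Tendsto (fun j => ‖b j‖ * r ^ j) atTop (𝓝 0)) (i : ℕ) :
    Tendsto (fun k => ‖b (i + k)‖ * r ^ k) atTop (𝓝 0) := by
  rcases eq_or_ne r 0 with rfl | hr
  · exact tendsto_const_nhds.congr' <| (eventually_ge_atTop 1).mono fun k hk => by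
      simp [zero_pow (Nat.one_le_iff_ne_zero.1 hk)]
  · have := ((tendsto_add_atTop_iff_nat i).2 hb).div_const (r ^ i)
    rw [zero_div] at this
    refine this.congr fun k => ?_
    rw [add_comm k i, pow_add]
    field_simp

lemma tendsto_add_cofinite_atTop : Tendsto (fun p : ℕ × ℕ => p.1 + p.2) cofinite atTop := by
  rw [← Nat.cofinite_eq_atTop]
  exact Tendsto.cofinite_of_finite_preimage_singleton fun k =>
    ((antidiagonal k).finite_toSet.subset fun _ hp => mem_antidiagonal.2 hp).to_subtype

section TaylorShift

variable {F : Type*} [NormedField F]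

def taylorShiftTerm (x : F) (b : ℕ → F) (i n : ℕ) : F :=
  (((i + n).choose i : ℕ) : F) * b (i + n) * x ^ n

/-- If `f = ∑ b j * t ^ j`, then `f (t + x) = ∑ taylorShift x b i * t ^ i`. -/
noncomputable def taylorShift (x : F) (b : ℕ → F) (i : ℕ) : F :=
  ∑' n, taylorShiftTerm x b i n

lemma taylorShift_zero (b : ℕ → F) : taylorShift 0 b = b := by
  funext i
  rw [taylorShift, tsum_eq_single 0 fun n hn => by simp [taylorShiftTerm, hn]]
  simp [taylorShiftTerm]

lemma sum_antidiagonal_taylorShiftTerm (x y : F) (b : ℕ → F) (i k : ℕ) :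
    ∑ p ∈ antidiagonal k, (((i + p.1).choose i : ℕ) : F) * taylorShiftTerm y b (i + p.1) p.2
      * x ^ p.1 = taylorShiftTerm (x + y) b i k := by
  rw [taylorShiftTerm, (Commute.all x y).add_pow', mul_sum]
  refine sum_congr rfl fun p hp => ?_
  obtain rfl := mem_antidiagonal.1 hp
  have hchoose : ((i + p.1 + p.2).choose (i + p.1) * (i + p.1).choose i : ℕ)
      = (i + p.1 + p.2).choose i * (p.1 + p.2).choose p.1 := by
    simpa [add_assoc] using Nat.choose_mul (n := i + p.1 + p.2) (Nat.le_add_right i p.1)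
  have hchooseF := congrArg (Nat.cast : ℕ → F) hchoose
  push_cast at hchooseF
  simp only [taylorShiftTerm, ← add_assoc, nsmul_eq_mul]
  linear_combination (b (i + p.1 + p.2) * x ^ p.1 * y ^ p.2) * hchooseF

variable [IsUltrametricDist F]

lemma norm_taylorShiftTerm_le (x : F) (b : ℕ → F) (i n : ℕ) :
    ‖taylorShiftTerm x b i n‖ ≤ ‖b (i + n)‖ * ‖x‖ ^ n := by
  rw [taylorShiftTerm, norm_mul, norm_mul, norm_pow]
  calc _ ≤ 1 * ‖b (i + n)‖ * ‖x‖ ^ n := by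
        gcongr
        exact IsUltrametricDist.norm_natCast_le_one F _
    _ = _ := by rw [one_mul]

lemma summable_taylorShiftTerm [CompleteSpace F] {x : F} {r : ℝ} (hx : ‖x‖ ≤ r) {b : ℕ → F}
    (hb : Tendsto (fun j => ‖b j‖ * r ^ j) atTop (𝓝 0)) (i : ℕ) :
    Summable (taylorShiftTerm x b i) := by
  refine NonarchimedeanAddGroup.summable_of_tendsto_cofinite_zero ?_
  rw [Nat.cofinite_eq_atTop, tendsto_zero_iff_norm_tendsto_zero]
  refine squeeze_zero (fun n => norm_nonneg _) (fun n => ?_) (tendsto_norm_mul_pow_shift hb i)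
  exact (norm_taylorShiftTerm_le x b i n).trans (by gcongr)

lemma norm_taylorShift_mul_pow_le {x : F} {b : ℕ → F}
    (hb : BddAbove (Set.range fun j => ‖b j‖ * ‖x‖ ^ j)) (i : ℕ) :
    ‖taylorShift x b i‖ * ‖x‖ ^ i ≤ ⨆ j : {j : ℕ // i ≤ j}, ‖b j‖ * ‖x‖ ^ (j : ℕ) := by
  rw [← norm_pow, ← norm_mul, taylorShift, ← tsum_mul_right]
  refine IsUltrametricDist.norm_tsum_le_of_forall_le_of_nonneg
    (Real.iSup_nonneg fun j => by positivity) fun n => ?_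
  calc ‖taylorShiftTerm x b i n * x ^ i‖ ≤ ‖b (i + n)‖ * ‖x‖ ^ (i + n) := by
        rw [norm_mul, norm_pow, pow_add, mul_comm (‖x‖ ^ i), ← mul_assoc]
        gcongr
        exact norm_taylorShiftTerm_le x b i n
    _ ≤ _ := le_ciSup_tail hb (Nat.le_add_right i n)

lemma tendsto_norm_taylorShift_mul_pow {x : F} {b : ℕ → F}
    (hb : Tendsto (fun j => ‖b j‖ * ‖x‖ ^ j) atTop (𝓝 0)) :
    Tendsto (fun i => ‖taylorShift x b i‖ * ‖x‖ ^ i) atTop (𝓝 0) :=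
  squeeze_zero (fun i => by positivity) (norm_taylorShift_mul_pow_le hb.bddAbove_range)
    (tendsto_iSup_tail_zero hb fun j => by positivity)

variable [CompleteSpace F]

lemma hasSum_taylorShiftTerm_taylorShift {x y : F} {r : ℝ} (hx : ‖x‖ ≤ r) (hy : ‖y‖ ≤ r)
    {b : ℕ → F} (hb : Tendsto (fun j => ‖b j‖ * r ^ j) atTop (𝓝 0)) (i : ℕ) :
    HasSum (taylorShiftTerm x (taylorShift y b) i) (taylorShift (x + y) b i) := by
  have hr : 0 ≤ r := (norm_nonneg x).trans hx
  set g : ℕ × ℕ → F := fun p =>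
    (((i + p.1).choose i : ℕ) : F) * taylorShiftTerm y b (i + p.1) p.2 * x ^ p.1
  have hg : Summable g := by
    refine NonarchimedeanAddGroup.summable_of_tendsto_cofinite_zero ?_
    rw [tendsto_zero_iff_norm_tendsto_zero]
    refine squeeze_zero (fun p => norm_nonneg _) (fun p => ?_)
      ((tendsto_norm_mul_pow_shift hb i).comp tendsto_add_cofinite_atTop)
    calc ‖g p‖ ≤ 1 * (‖b (i + p.1 + p.2)‖ * r ^ p.2) * r ^ p.1 := by
          simp only [g, norm_mul, norm_pow]
          gcongr
          · exact IsUltrametricDist.norm_natCast_le_one F _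
          · exact (norm_taylorShiftTerm_le y b _ _).trans (by gcongr)
      _ = ‖b (i + (p.1 + p.2))‖ * r ^ (p.1 + p.2) := by rw [← add_assoc]; ring
  obtain ⟨T, hT⟩ := hg
  have hrows : HasSum (taylorShiftTerm x (taylorShift y b) i) T :=
    hT.prod_fiberwise fun n =>
      ((summable_taylorShiftTerm hy hb (i + n)).hasSum.mul_left _).mul_right _
  have hdiagonals : HasSum (taylorShiftTerm (x + y) b i) T := by
    convert (HasAntidiagonal.sigmaAntidiagonalEquivProd.hasSum_iff.2 hT).sigma
      fun k => hasSum_fintype _ using 1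
    funext k
    rw [← sum_antidiagonal_taylorShiftTerm, ← sum_coe_sort]
    rfl
  rwa [taylorShift, hdiagonals.tsum_eq]

lemma taylorShift_taylorShift {x y : F} {r : ℝ} (hx : ‖x‖ ≤ r) (hy : ‖y‖ ≤ r) {b : ℕ → F}
    (hb : Tendsto (fun j => ‖b j‖ * r ^ j) atTop (𝓝 0)) :
    taylorShift x (taylorShift y b) = taylorShift (x + y) b :=
  funext fun i => (hasSum_taylorShiftTerm_taylorShift hx hy hb i).tsum_eq

end TaylorShift

theorem statement13_general
    {F : Type*} [NormedField F] [IsUltrametricDist F] [CompleteSpace F]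
    (q : ℕ) (θ : F) (hθ : ‖θ‖ = (q : ℝ)) :
    (∀ b : ℕ → F, Tendsto (fun j => ‖b j‖ * (q : ℝ) ^ j) atTop (nhds 0) →
      (∀ i : ℕ,
        Summable (fun n : ℕ => (((i + n).choose i : ℕ) : F) * b (i + n) * θ ^ n) ∧
        ‖∑' n : ℕ, (((i + n).choose i : ℕ) : F) * b (i + n) * θ ^ n‖ * (q : ℝ) ^ i
          ≤ ⨆ j : {j : ℕ // i ≤ j}, ‖b (j : ℕ)‖ * (q : ℝ) ^ (j : ℕ)) ∧
      Tendsto (fun i : ℕ =>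
          ‖∑' n : ℕ, (((i + n).choose i : ℕ) : F) * b (i + n) * θ ^ n‖ * (q : ℝ) ^ i)
        atTop (nhds 0))
    ∧ ∀ a : ℕ → F, Tendsto (fun i => ‖a i‖ * (q : ℝ) ^ i) atTop (nhds 0) →
        ∃! b : ℕ → F,
          Tendsto (fun j => ‖b j‖ * (q : ℝ) ^ j) atTop (nhds 0) ∧
          ∀ i : ℕ,
            HasSum (fun n : ℕ => (((i + n).choose i : ℕ) : F) * b (i + n) * θ ^ n) (a i) := by
  rw [← hθ]
  refine ⟨fun b hb => ⟨fun i => ⟨summable_taylorShiftTerm le_rfl hb i,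
    norm_taylorShift_mul_pow_le hb.bddAbove_range i⟩, tendsto_norm_taylorShift_mul_pow hb⟩,
    fun a ha => ⟨taylorShift (-θ) a, ⟨?_, fun i => ?_⟩, fun b ⟨hb, hba⟩ => ?_⟩⟩
  · simpa only [norm_neg] using tendsto_norm_taylorShift_mul_pow (x := -θ) (by rwa [norm_neg])
  · have := hasSum_taylorShiftTerm_taylorShift le_rfl (norm_neg θ).le ha i
    rwa [add_neg_cancel, taylorShift_zero] at this
  · have hab : taylorShift θ b = a := funext fun i => (hba i).tsum_eq
    calc b = taylorShift (-θ + θ) b := by rw [neg_add_cancel, taylorShift_zero]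
      _ = taylorShift (-θ) a := by rw [← taylorShift_taylorShift (norm_neg θ).le le_rfl hb, hab]

/-- image of the map `η : 𝕋_θ → F[[t−θ]]`, Section 2.4 of the paper.
(i) If `|b_j| q^j → 0` then for each `i` the family `(C(j,i) b_j θ^{j−i})_{j≥i}`
(reindexed by `j = i + n`) is summable, its sum `a_i` satisfies
`|a_i| q^i ≤ sup_{j≥i} |b_j| q^j`, and in particular `|a_i| q^i → 0`.
(ii) Conversely, every sequence `(a_i)` with `|a_i| q^i → 0` arises in this way from a
unique sequence `(b_j)` with `|b_j| q^j → 0`. -/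
theorem statement13
    {F : Type*} [NormedField F] [IsUltrametricDist F] [CompleteSpace F]
    (q : ℕ) (hq : IsPrimePow q) (θ : F) (hθ : ‖θ‖ = (q : ℝ)) :
    (∀ b : ℕ → F, Tendsto (fun j => ‖b j‖ * (q : ℝ) ^ j) atTop (nhds 0) →
      (∀ i : ℕ,
        Summable (fun n : ℕ => (((i + n).choose i : ℕ) : F) * b (i + n) * θ ^ n) ∧
        ‖∑' n : ℕ, (((i + n).choose i : ℕ) : F) * b (i + n) * θ ^ n‖ * (q : ℝ) ^ i
          ≤ ⨆ j : {j : ℕ // i ≤ j}, ‖b (j : ℕ)‖ * (q : ℝ) ^ (j : ℕ)) ∧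
      Tendsto (fun i : ℕ =>
          ‖∑' n : ℕ, (((i + n).choose i : ℕ) : F) * b (i + n) * θ ^ n‖ * (q : ℝ) ^ i)
        atTop (nhds 0))
    ∧ ∀ a : ℕ → F, Tendsto (fun i => ‖a i‖ * (q : ℝ) ^ i) atTop (nhds 0) →
        ∃! b : ℕ → F,
          Tendsto (fun j => ‖b j‖ * (q : ℝ) ^ j) atTop (nhds 0) ∧
          ∀ i : ℕ,
            HasSum (fun n : ℕ => (((i + n).choose i : ℕ) : F) * b (i + n) * θ ^ n) (a i) :=
  statement13_general q θ hθ
end
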